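/- arXiv:2301.03555 — 2 statements merged into one kernel-verified Lean document; each statement's English description precedes it below -/
import Mathlib

section
/- Let Ω be the right triangle {(x,y) : 0 ≤ x ≤ a, 0 ≤ y ≤ 1 − x/a} with a > 0, and suppose h > 0 and u is real-valued, C² on an open neighborhood of Ω, satisfies −h²Δu = u on Ω, u = 0 on ∂Ω, and ∫_Ω u² dV = 1. Then ∫_Ω |h ∂_x u|² dV = 1 − (1/2)·∫₀^a (1 − x/a)·|h ∂_ν u(x, 1−x/a)|² dx, where ∂_ν u = γ^{−1}(∂_x u + a ∂_y u) with γ = (1+a²)^{1/2} is the outward normal derivative on the hypotenuse. -/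
open Real MeasureTheory Set



def Omg (a : ℝ) : Set (ℝ × ℝ) :=
  {p | 0 ≤ p.1 ∧ p.1 ≤ a ∧ 0 ≤ p.2 ∧ p.2 ≤ 1 - p.1 / a}

lemma isClosed_Omg (a : ℝ) : IsClosed (Omg a) := by
  have h1 : Omg a = {p : ℝ × ℝ | 0 ≤ p.1} ∩ {p | p.1 ≤ a} ∩ {p | 0 ≤ p.2}
      ∩ {p | p.2 ≤ 1 - p.1 / a} := by
    ext p; simp only [Omg, mem_setOf_eq, mem_inter_iff]; tauto
  rw [h1]
  exact (((isClosed_le continuous_const continuous_fst).inter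
    (isClosed_le continuous_fst continuous_const)).inter
    (isClosed_le continuous_const continuous_snd)).inter
    (isClosed_le continuous_snd (continuous_const.sub (continuous_fst.div_const a)))

lemma isCompact_Omg {a : ℝ} (ha : 0 < a) : IsCompact (Omg a) := by
  refine IsCompact.of_isClosed_subset (isCompact_Icc (a := ((0:ℝ),(0:ℝ))) (b := (a,1)))
    (isClosed_Omg a) ?_
  rintro ⟨x, y⟩ ⟨h1, h2, h3, h4⟩
  have : x / a ≥ 0 := div_nonneg h1 ha.le
  exact ⟨⟨h1, h3⟩, ⟨h2, by dsimp at *; linarith⟩⟩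

lemma fubini_x {a : ℝ} (ha : 0 < a) (f : ℝ × ℝ → ℝ) (hf : ContinuousOn f (Omg a)) :
    ∫ p in Omg a, f p = ∫ x in (0:ℝ)..a, ∫ y in (0:ℝ)..(1 - x / a), f (x, y) := by
  have hms : MeasurableSet (Omg a) := (isClosed_Omg a).measurableSet
  have hint : IntegrableOn f (Omg a) := hf.integrableOn_compact (isCompact_Omg ha)
  have hind : Integrable ((Omg a).indicator f) := (integrable_indicator_iff hms).2 hint
  rw [← integral_indicator hms]
  rw [show (volume : Measure (ℝ × ℝ)) = (volume : Measure ℝ).prod volume from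
    (MeasureTheory.Measure.volume_eq_prod ℝ ℝ)] at hind ⊢
  rw [integral_prod _ hind]
  have h2 : ∀ x : ℝ, (∫ y : ℝ, (Omg a).indicator f (x, y))
      = (Icc (0:ℝ) a).indicator (fun x => ∫ y in (0:ℝ)..(1 - x / a), f (x, y)) x := by
    intro x
    by_cases hx : x ∈ Icc (0:ℝ) a
    · have hYx : (0:ℝ) ≤ 1 - x / a := by
        rw [sub_nonneg, div_le_one ha]; exact hx.2
      have key : ∀ y : ℝ, (Omg a).indicator f (x, y)
          = (Icc (0:ℝ) (1 - x / a)).indicator (fun y => f (x, y)) y := by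
        intro y
        by_cases hy : y ∈ Icc (0:ℝ) (1 - x / a)
        · rw [Set.indicator_of_mem hy,
            Set.indicator_of_mem (show (x,y) ∈ Omg a from ⟨hx.1, hx.2, hy.1, hy.2⟩)]
        · rw [Set.indicator_of_notMem hy, Set.indicator_of_notMem]
          intro hmem; exact hy ⟨hmem.2.2.1, hmem.2.2.2⟩
      rw [Set.indicator_of_mem hx]
      simp_rw [key]
      rw [integral_indicator measurableSet_Icc, integral_Icc_eq_integral_Ioc,
        ← intervalIntegral.integral_of_le hYx]
    · rw [Set.indicator_of_notMem hx]
      have key : ∀ y : ℝ, (Omg a).indicator f (x, y) = 0 := by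
        intro y; apply Set.indicator_of_notMem
        intro hmem; exact hx ⟨hmem.1, hmem.2.1⟩
      simp [key]
  simp_rw [h2]
  rw [integral_indicator measurableSet_Icc, integral_Icc_eq_integral_Ioc,
    ← intervalIntegral.integral_of_le ha.le]

lemma mem_Omg_iff {a : ℝ} (ha : 0 < a) {x y : ℝ} :
    (x, y) ∈ Omg a ↔ (0 ≤ y ∧ y ≤ 1) ∧ (0 ≤ x ∧ x ≤ a * (1 - y)) := by
  constructor
  · rintro ⟨h1, h2, h3, h4⟩
    have hxa : 0 ≤ x / a := div_nonneg h1 ha.le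
    have h5 : x / a ≤ 1 - y := by linarith
    have h6 : x ≤ (1 - y) * a := (div_le_iff₀ ha).1 h5
    exact ⟨⟨h3, by linarith⟩, ⟨h1, by linarith [h6]⟩⟩
  · rintro ⟨⟨h1, h2⟩, h3, h4⟩
    have h5 : x / a ≤ 1 - y := (div_le_iff₀ ha).2 (by linarith)
    have h6 : a * (1 - y) ≤ a := by nlinarith
    exact ⟨h3, by linarith, h1, by linarith⟩

lemma fubini_y {a : ℝ} (ha : 0 < a) (f : ℝ × ℝ → ℝ) (hf : ContinuousOn f (Omg a)) :
    ∫ p in Omg a, f p = ∫ y in (0:ℝ)..1, ∫ x in (0:ℝ)..(a * (1 - y)), f (x, y) := by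
  have hms : MeasurableSet (Omg a) := (isClosed_Omg a).measurableSet
  have hint : IntegrableOn f (Omg a) := hf.integrableOn_compact (isCompact_Omg ha)
  have hind : Integrable ((Omg a).indicator f) := (integrable_indicator_iff hms).2 hint
  rw [← integral_indicator hms]
  rw [show (volume : Measure (ℝ × ℝ)) = (volume : Measure ℝ).prod volume from
    (MeasureTheory.Measure.volume_eq_prod ℝ ℝ)] at hind ⊢
  rw [integral_prod_symm _ hind]
  have h2 : ∀ y : ℝ, (∫ x : ℝ, (Omg a).indicator f (x, y))
      = (Icc (0:ℝ) 1).indicator (fun y => ∫ x in (0:ℝ)..(a * (1 - y)), f (x, y)) y := by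
    intro y
    by_cases hy : y ∈ Icc (0:ℝ) 1
    · have hXy : (0:ℝ) ≤ a * (1 - y) := mul_nonneg ha.le (by linarith [hy.2])
      have key : ∀ x : ℝ, (Omg a).indicator f (x, y)
          = (Icc (0:ℝ) (a * (1 - y))).indicator (fun x => f (x, y)) x := by
        intro x
        by_cases hx : x ∈ Icc (0:ℝ) (a * (1 - y))
        · rw [Set.indicator_of_mem hx,
            Set.indicator_of_mem ((mem_Omg_iff ha).2 ⟨⟨hy.1, hy.2⟩, hx.1, hx.2⟩)]
        · rw [Set.indicator_of_notMem hx, Set.indicator_of_notMem]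
          intro hmem; exact hx ⟨((mem_Omg_iff ha).1 hmem).2.1, ((mem_Omg_iff ha).1 hmem).2.2⟩
      rw [Set.indicator_of_mem hy]
      simp_rw [key]
      rw [integral_indicator measurableSet_Icc, integral_Icc_eq_integral_Ioc,
        ← intervalIntegral.integral_of_le hXy]
    · rw [Set.indicator_of_notMem hy]
      have key : ∀ x : ℝ, (Omg a).indicator f (x, y) = 0 := by
        intro x; apply Set.indicator_of_notMem
        intro hmem; exact hy ⟨((mem_Omg_iff ha).1 hmem).1.1, ((mem_Omg_iff ha).1 hmem).1.2⟩
      simp [key]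
  simp_rw [h2]
  rw [integral_indicator measurableSet_Icc, integral_Icc_eq_integral_Ioc,
    ← intervalIntegral.integral_of_le (by norm_num : (0:ℝ) ≤ 1)]

lemma mem_frontier_Omg {a : ℝ} (ha : 0 < a) {p : ℝ × ℝ} (hp : p ∈ Omg a)
    (hedge : p.1 = 0 ∨ p.2 = 0 ∨ p.2 = 1 - p.1 / a) : p ∈ frontier (Omg a) := by
  rw [frontier, (isClosed_Omg a).closure_eq]
  refine ⟨hp, fun hint => ?_⟩
  rw [mem_interior_iff_mem_nhds, Metric.mem_nhds_iff] at hint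
  obtain ⟨ε, hε, hball⟩ := hint
  have hd : ∀ q : ℝ × ℝ, dist q.1 p.1 < ε → dist q.2 p.2 < ε → q ∈ Omg a := by
    intro q h1 h2
    exact hball (by rw [Metric.mem_ball, Prod.dist_eq]; exact max_lt h1 h2)
  have dminus : ∀ t : ℝ, dist (t - ε / 2) t < ε := by
    intro t
    rw [Real.dist_eq, show t - ε / 2 - t = -(ε / 2) by ring, abs_neg,
      abs_of_pos (by linarith)]
    linarith
  have dplus : ∀ t : ℝ, dist (t + ε / 2) t < ε := by
    intro t
    rw [Real.dist_eq, show t + ε / 2 - t = ε / 2 by ring, abs_of_pos (by linarith)]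
    linarith
  have dself : ∀ t : ℝ, dist t t < ε := by intro t; rw [dist_self]; exact hε
  rcases hedge with h1 | h2 | h3
  · have hq : (p.1 - ε / 2, p.2) ∈ Omg a := hd _ (dminus p.1) (dself p.2)
    have := hq.1; dsimp at this; linarith
  · have hq : (p.1, p.2 - ε / 2) ∈ Omg a := hd _ (dself p.1) (dminus p.2)
    have := hq.2.2.1; dsimp at this; linarith
  · have hq : (p.1, p.2 + ε / 2) ∈ Omg a := hd _ (dself p.1) (dplus p.2)
    have h4 := hq.2.2.2; dsimp at h4; linarith


noncomputable def FX (u : ℝ × ℝ → ℝ) (p : ℝ × ℝ) : ℝ := fderiv ℝ u p (1, 0)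
noncomputable def FY (u : ℝ × ℝ → ℝ) (p : ℝ × ℝ) : ℝ := fderiv ℝ u p (0, 1)

lemma FX_apply (u : ℝ × ℝ → ℝ) (p : ℝ × ℝ) : FX u p = fderiv ℝ u p (1, 0) := rfl
lemma FY_apply (u : ℝ × ℝ → ℝ) (p : ℝ × ℝ) : FY u p = fderiv ℝ u p (0, 1) := rfl

lemma hasDerivAt_slice_x {g : ℝ × ℝ → ℝ} {x y : ℝ} (hg : DifferentiableAt ℝ g (x, y)) :
    HasDerivAt (fun t => g (t, y)) (FX g (x, y)) x := by
  have h1 : HasDerivAt (fun t : ℝ => (t, y)) (((1:ℝ), (0:ℝ)) : ℝ × ℝ) x :=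
    (hasDerivAt_id x).prodMk (hasDerivAt_const x y)
  exact hg.hasFDerivAt.comp_hasDerivAt x h1

lemma hasDerivAt_slice_y {g : ℝ × ℝ → ℝ} {x y : ℝ} (hg : DifferentiableAt ℝ g (x, y)) :
    HasDerivAt (fun t => g (x, t)) (FY g (x, y)) y := by
  have h1 : HasDerivAt (fun t : ℝ => (x, t)) (((0:ℝ), (1:ℝ)) : ℝ × ℝ) y :=
    (hasDerivAt_const y x).prodMk (hasDerivAt_id y)
  exact hg.hasFDerivAt.comp_hasDerivAt y h1

lemma hasDerivAt_slice_hyp {a : ℝ} (ha : a ≠ 0) {g : ℝ × ℝ → ℝ} {x : ℝ}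
    (hg : DifferentiableAt ℝ g (x, 1 - x / a)) :
    HasDerivAt (fun t => g (t, 1 - t / a))
      (FX g (x, 1 - x / a) - a⁻¹ * FY g (x, 1 - x / a)) x := by
  have h1 : HasDerivAt (fun t : ℝ => (t, 1 - t / a)) (((1:ℝ), -(1/a)) : ℝ × ℝ) x :=
    (hasDerivAt_id x).prodMk (((hasDerivAt_id x).div_const a).const_sub 1)
  have h2 := hg.hasFDerivAt.comp_hasDerivAt x h1
  have h3 : (((1:ℝ), -(1/a)) : ℝ × ℝ) = ((1:ℝ), (0:ℝ)) + (-a⁻¹) • (((0:ℝ), (1:ℝ)) : ℝ × ℝ) := by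
    rw [one_div]; ext <;> simp
  rw [h3, (fderiv ℝ g (x, 1 - x / a)).map_add, (fderiv ℝ g (x, 1 - x / a)).map_smul] at h2
  simpa [FX, FY, smul_eq_mul, sub_eq_add_neg, neg_mul, Function.comp_def] using h2


noncomputable def Afun (u : ℝ × ℝ → ℝ) (h : ℝ) (p : ℝ × ℝ) : ℝ :=
  FY u p * FY u p - (FX u p * FX u p + FY u p * FY u p) / 2 + u p * u p / (2 * h ^ 2)

noncomputable def DAfun (u : ℝ × ℝ → ℝ) (h : ℝ) (p : ℝ × ℝ) : ℝ :=
  (FY (FY u) p * FY u p + FY u p * FY (FY u) p)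
    - ((FY (FX u) p * FX u p + FX u p * FY (FX u) p)
        + (FY (FY u) p * FY u p + FY u p * FY (FY u) p)) / 2
    + (FY u p * u p + u p * FY u p) / (2 * h ^ 2)

lemma hasDerivAt_A_slice {u : ℝ × ℝ → ℝ} {h : ℝ} {x y : ℝ}
    (h1 : DifferentiableAt ℝ u (x, y)) (h2 : DifferentiableAt ℝ (FX u) (x, y))
    (h3 : DifferentiableAt ℝ (FY u) (x, y)) :
    HasDerivAt (fun t => Afun u h (x, t)) (DAfun u h (x, y)) y := by
  unfold Afun DAfun
  exact (((hasDerivAt_slice_y h3).mul (hasDerivAt_slice_y h3)).sub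
    ((((hasDerivAt_slice_y h2).mul (hasDerivAt_slice_y h2)).add
      ((hasDerivAt_slice_y h3).mul (hasDerivAt_slice_y h3))).div_const 2)).add
    (((hasDerivAt_slice_y h1).mul (hasDerivAt_slice_y h1)).div_const (2 * h ^ 2))

lemma contOn_slice_x {F : ℝ × ℝ → ℝ} {U : Set (ℝ × ℝ)} (hF : ContinuousOn F U) {y : ℝ}
    {s : Set ℝ} (hmap : ∀ x ∈ s, (x, y) ∈ U) : ContinuousOn (fun x => F (x, y)) s :=
  hF.comp ((continuous_id.prodMk continuous_const).continuousOn) hmap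

lemma contOn_slice_y {F : ℝ × ℝ → ℝ} {U : Set (ℝ × ℝ)} (hF : ContinuousOn F U) {x : ℝ}
    {s : Set ℝ} (hmap : ∀ y ∈ s, (x, y) ∈ U) : ContinuousOn (fun y => F (x, y)) s :=
  hF.comp ((continuous_const.prodMk continuous_id).continuousOn) hmap

lemma contOn_slice_hyp {F : ℝ × ℝ → ℝ} {U : Set (ℝ × ℝ)} (hF : ContinuousOn F U) {a : ℝ}
    {s : Set ℝ} (hmap : ∀ x ∈ s, ((x, 1 - x / a) : ℝ × ℝ) ∈ U) :
    ContinuousOn (fun x => F (x, 1 - x / a)) s :=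
  hF.comp ((continuous_id.prodMk
    (continuous_const.sub (continuous_id.div_const a))).continuousOn) hmap

/-- For an `L²`-normalized Dirichlet eigenfunction `u` on the right triangle `Ω`,
`∫_Ω |h ∂_x u|² dV = 1 - (1/2)·∫₀^a (1 - x/a)·|h ∂_ν u(x, 1-x/a)|² dx`, where
`∂_ν u = γ⁻¹(∂_x u + a ∂_y u)`, `γ = (1+a²)^{1/2}`, is the outward normal derivative
on the hypotenuse. -/
theorem x_energy_hypotenuse_identity (a : ℝ) (ha : 0 < a) (h : ℝ) (hh : 0 < h)
    (u : ℝ × ℝ → ℝ)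
    (U : Set (ℝ × ℝ)) (hU : IsOpen U) (hΩU : Omg a ⊆ U) (hreg : ContDiffOn ℝ 2 u U)
    (heig : ∀ p ∈ Omg a,
      -h ^ 2 *
        (fderiv ℝ (fun q => fderiv ℝ u q (1, 0)) p (1, 0)
          + fderiv ℝ (fun q => fderiv ℝ u q (0, 1)) p (0, 1))
      = u p)
    (hbdry : ∀ p ∈ frontier (Omg a), u p = 0)
    (hnorm : ∫ p in Omg a, (u p) ^ 2 = 1) :
    ∫ p in Omg a, (h * fderiv ℝ u p (1, 0)) ^ 2
      = 1 - (1 / 2) * ∫ x in (0:ℝ)..a,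
          (1 - x / a) * (h * ((Real.sqrt (1 + a ^ 2))⁻¹ *
            (fderiv ℝ u (x, 1 - x / a) (1, 0)
              + a * fderiv ℝ u (x, 1 - x / a) (0, 1)))) ^ 2 := by
  have ha' : a ≠ 0 := ne_of_gt ha
  have hh' : h ≠ 0 := ne_of_gt hh
  have hms : MeasurableSet (Omg a) := (isClosed_Omg a).measurableSet
  have hcomp : IsCompact (Omg a) := isCompact_Omg ha
  simp only [← FX_apply, ← FY_apply] at heig ⊢
  replace heig : ∀ p ∈ Omg a, -h ^ 2 * (FX (FX u) p + FY (FY u) p) = u p := heig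
  -- regularity
  have hcd1 : ContDiffOn ℝ 1 (fderiv ℝ u) U := hreg.fderiv_of_isOpen hU (by norm_num)
  have hcdux : ContDiffOn ℝ 1 (FX u) U := hcd1.clm_apply contDiffOn_const
  have hcduy : ContDiffOn ℝ 1 (FY u) U := hcd1.clm_apply contDiffOn_const
  have hcu : ContinuousOn u U := hreg.continuousOn
  have hcux : ContinuousOn (FX u) U := hcdux.continuousOn
  have hcuy : ContinuousOn (FY u) U := hcduy.continuousOn
  have hcuxx : ContinuousOn (FX (FX u)) U :=
    (((hcdux.fderiv_of_isOpen (m := 0) hU (by norm_num)).clm_apply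
      contDiffOn_const).continuousOn)
  have hcuxy : ContinuousOn (FY (FX u)) U :=
    (((hcdux.fderiv_of_isOpen (m := 0) hU (by norm_num)).clm_apply
      contDiffOn_const).continuousOn)
  have hcuyx : ContinuousOn (FX (FY u)) U :=
    (((hcduy.fderiv_of_isOpen (m := 0) hU (by norm_num)).clm_apply
      contDiffOn_const).continuousOn)
  have hcuyy : ContinuousOn (FY (FY u)) U :=
    (((hcduy.fderiv_of_isOpen (m := 0) hU (by norm_num)).clm_apply
      contDiffOn_const).continuousOn)
  have hdU : ∀ p ∈ U, DifferentiableAt ℝ u p := fun p hp =>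
    ((hreg.differentiableOn (by norm_num)).differentiableAt (hU.mem_nhds hp))
  have hduxU : ∀ p ∈ U, DifferentiableAt ℝ (FX u) p := fun p hp =>
    ((hcdux.differentiableOn (by norm_num)).differentiableAt (hU.mem_nhds hp))
  have hduyU : ∀ p ∈ U, DifferentiableAt ℝ (FY u) p := fun p hp =>
    ((hcduy.differentiableOn (by norm_num)).differentiableAt (hU.mem_nhds hp))
  -- Clairaut
  have hsymm : ∀ p ∈ U, FY (FX u) p = FX (FY u) p := by
    intro p hp
    have hd2 : DifferentiableAt ℝ (fderiv ℝ u) p :=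
      (hcd1.differentiableOn (by norm_num)).differentiableAt (hU.mem_nhds hp)
    have hsym := (hreg.contDiffAt (hU.mem_nhds hp)).isSymmSndFDerivAt (by simp [minSmoothness_of_isRCLikeNormedField])
    have e1 : HasFDerivAt (FX u)
        ((fderiv ℝ (fderiv ℝ u) p).flip ((1:ℝ), (0:ℝ))) p := by
      have := hd2.hasFDerivAt.clm_apply
        (hasFDerivAt_const (((1:ℝ), (0:ℝ)) : ℝ × ℝ) p)
      simp at this; exact this
    have e2 : HasFDerivAt (FY u)
        ((fderiv ℝ (fderiv ℝ u) p).flip ((0:ℝ), (1:ℝ))) p := by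
      have := hd2.hasFDerivAt.clm_apply
        (hasFDerivAt_const (((0:ℝ), (1:ℝ)) : ℝ × ℝ) p)
      simp at this; exact this
    have e1' : FY (FX u) p = fderiv ℝ (fderiv ℝ u) p (0, 1) (1, 0) := by
      rw [FY_apply, e1.fderiv]; rfl
    have e2' : FX (FY u) p = fderiv ℝ (fderiv ℝ u) p (1, 0) (0, 1) := by
      rw [FX_apply, e2.fderiv]; rfl
    rw [e1', e2', hsym (0, 1) (1, 0)]
  -- membership helpers
  have hmem_bot : ∀ x ∈ Icc (0:ℝ) a, ((x, (0:ℝ)) : ℝ × ℝ) ∈ Omg a := by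
    intro x hx
    exact ⟨hx.1, hx.2, le_refl 0, by rw [sub_nonneg, div_le_one ha]; exact hx.2⟩
  have hmem_left : ∀ y ∈ Icc (0:ℝ) 1, (((0:ℝ), y) : ℝ × ℝ) ∈ Omg a := by
    intro y hy
    refine ⟨le_refl 0, ha.le, hy.1, ?_⟩
    simpa using hy.2
  have hmem_hyp : ∀ x ∈ Icc (0:ℝ) a, ((x, 1 - x / a) : ℝ × ℝ) ∈ Omg a := by
    intro x hx
    have h0 : 0 ≤ 1 - x / a := by rw [sub_nonneg, div_le_one ha]; exact hx.2
    exact ⟨hx.1, hx.2, h0, le_refl _⟩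
  have hYmem : ∀ x ∈ Icc (0:ℝ) a, ∀ y ∈ Icc (0:ℝ) (1 - x / a), ((x, y) : ℝ × ℝ) ∈ Omg a :=
    fun x hx y hy => ⟨hx.1, hx.2, hy.1, hy.2⟩
  have hXmem : ∀ y ∈ Icc (0:ℝ) 1, ∀ x ∈ Icc (0:ℝ) (a * (1 - y)), ((x, y) : ℝ × ℝ) ∈ Omg a :=
    fun y hy x hx => (mem_Omg_iff ha).2 ⟨⟨hy.1, hy.2⟩, hx.1, hx.2⟩
  -- boundary values of u
  have hu_bot : ∀ x ∈ Icc (0:ℝ) a, u (x, 0) = 0 := fun x hx =>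
    hbdry _ (mem_frontier_Omg ha (hmem_bot x hx) (Or.inr (Or.inl rfl)))
  have hu_left : ∀ y ∈ Icc (0:ℝ) 1, u (0, y) = 0 := fun y hy =>
    hbdry _ (mem_frontier_Omg ha (hmem_left y hy) (Or.inl rfl))
  have hu_hyp : ∀ x ∈ Icc (0:ℝ) a, u (x, 1 - x / a) = 0 := fun x hx =>
    hbdry _ (mem_frontier_Omg ha (hmem_hyp x hx) (Or.inr (Or.inr rfl)))
  -- derivative vanishing along edges
  have huy_left : ∀ y ∈ Icc (0:ℝ) 1, FY u (0, y) = 0 := by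
    have hIoo : ∀ y ∈ Ioo (0:ℝ) 1, FY u (0, y) = 0 := by
      intro y hy
      have hd := hasDerivAt_slice_y (hdU _ (hΩU (hmem_left y ⟨hy.1.le, hy.2.le⟩)))
      have hev : (fun t => u ((0:ℝ), t)) =ᶠ[nhds y] (fun _ => (0:ℝ)) := by
        filter_upwards [Icc_mem_nhds hy.1 hy.2] with t ht using hu_left t ht
      exact hd.unique ((hasDerivAt_const y (0:ℝ)).congr_of_eventuallyEq hev)
    intro y hy
    have hcl : Set.EqOn (fun y => FY u (0, y)) (fun _ => (0:ℝ)) (Icc (0:ℝ) 1) :=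
      Set.EqOn.of_subset_closure (fun t ht => hIoo t ht)
        (contOn_slice_y hcuy (fun t ht => hΩU (hmem_left t ht))) continuousOn_const
        Ioo_subset_Icc_self (by rw [closure_Ioo (by norm_num : (0:ℝ) ≠ 1)])
    exact hcl hy
  have hux_bot : ∀ x ∈ Icc (0:ℝ) a, FX u (x, 0) = 0 := by
    have hIoo : ∀ x ∈ Ioo (0:ℝ) a, FX u (x, 0) = 0 := by
      intro x hx
      have hd := hasDerivAt_slice_x (hdU _ (hΩU (hmem_bot x ⟨hx.1.le, hx.2.le⟩)))
      have hev : (fun t => u (t, (0:ℝ))) =ᶠ[nhds x] (fun _ => (0:ℝ)) := by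
        filter_upwards [Icc_mem_nhds hx.1 hx.2] with t ht using hu_bot t ht
      exact hd.unique ((hasDerivAt_const x (0:ℝ)).congr_of_eventuallyEq hev)
    intro x hx
    have hcl : Set.EqOn (fun x => FX u (x, 0)) (fun _ => (0:ℝ)) (Icc (0:ℝ) a) :=
      Set.EqOn.of_subset_closure (fun t ht => hIoo t ht)
        (contOn_slice_x hcux (fun t ht => hΩU (hmem_bot t ht))) continuousOn_const
        Ioo_subset_Icc_self (by rw [closure_Ioo ha.ne])
    exact hcl hx
  -- tangential relation on hypotenuse
  have hhyp : ∀ x ∈ Icc (0:ℝ) a, FX u (x, 1 - x / a) = a⁻¹ * FY u (x, 1 - x / a) := by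
    have hIoo : ∀ x ∈ Ioo (0:ℝ) a, FX u (x, 1 - x / a) = a⁻¹ * FY u (x, 1 - x / a) := by
      intro x hx
      have hd := hasDerivAt_slice_hyp ha' (hdU _ (hΩU (hmem_hyp x ⟨hx.1.le, hx.2.le⟩)))
      have hev : (fun t => u (t, 1 - t / a)) =ᶠ[nhds x] (fun _ => (0:ℝ)) := by
        filter_upwards [Icc_mem_nhds hx.1 hx.2] with t ht using hu_hyp t ht
      have h0 := hd.unique ((hasDerivAt_const x (0:ℝ)).congr_of_eventuallyEq hev)
      linarith [h0]
    intro x hx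
    have hcl : Set.EqOn (fun x => FX u (x, 1 - x / a))
        (fun x => a⁻¹ * FY u (x, 1 - x / a)) (Icc (0:ℝ) a) :=
      Set.EqOn.of_subset_closure (fun t ht => hIoo t ht)
        (contOn_slice_hyp hcux (fun t ht => hΩU (hmem_hyp t ht)))
        (continuousOn_const.mul (contOn_slice_hyp hcuy (fun t ht => hΩU (hmem_hyp t ht))))
        Ioo_subset_Icc_self (by rw [closure_Ioo ha.ne])
    exact hcl hx
  -- FTC / IBP in the x-direction
  have hIBPx : ∀ y ∈ Icc (0:ℝ) 1, ∫ x in (0:ℝ)..(a * (1 - y)),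
      (FX u (x, y) * FX u (x, y) + u (x, y) * FX (FX u) (x, y)) = 0 := by
    intro y hy
    have hXy : (0:ℝ) ≤ a * (1 - y) := mul_nonneg ha.le (by linarith [hy.2])
    have huI : uIcc (0:ℝ) (a * (1 - y)) = Icc 0 (a * (1 - y)) := uIcc_of_le hXy
    have hmemU : ∀ x ∈ Icc (0:ℝ) (a * (1 - y)), ((x, y) : ℝ × ℝ) ∈ U :=
      fun x hx => hΩU (hXmem y hy x hx)
    have hft := intervalIntegral.integral_eq_sub_of_hasDerivAt
      (f := fun x => u (x, y) * FX u (x, y))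
      (f' := fun x => FX u (x, y) * FX u (x, y) + u (x, y) * FX (FX u) (x, y))
      (a := 0) (b := a * (1 - y)) ?_ ?_
    · rw [hft]
      have hend : a * (1 - y) ∈ Icc (0:ℝ) a := ⟨hXy, by nlinarith [hy.1]⟩
      have e1 := hu_hyp _ hend
      rw [show 1 - (a * (1 - y)) / a = y by field_simp; ring] at e1
      rw [e1, hu_left y hy, zero_mul, zero_mul, sub_zero]
    · intro x hx
      rw [huI] at hx
      exact (hasDerivAt_slice_x (hdU _ (hmemU x hx))).mul
        (hasDerivAt_slice_x (hduxU _ (hmemU x hx)))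
    · apply ContinuousOn.intervalIntegrable
      rw [huI]
      exact ((contOn_slice_x hcux hmemU).mul (contOn_slice_x hcux hmemU)).add
        ((contOn_slice_x hcu hmemU).mul (contOn_slice_x hcuxx hmemU))
  -- FTC / IBP in the y-direction
  have hIBPy : ∀ x ∈ Icc (0:ℝ) a, ∫ y in (0:ℝ)..(1 - x / a),
      (FY u (x, y) * FY u (x, y) + u (x, y) * FY (FY u) (x, y)) = 0 := by
    intro x hx
    have hYx : (0:ℝ) ≤ 1 - x / a := by rw [sub_nonneg, div_le_one ha]; exact hx.2
    have huI : uIcc (0:ℝ) (1 - x / a) = Icc 0 (1 - x / a) := uIcc_of_le hYx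
    have hmemU : ∀ y ∈ Icc (0:ℝ) (1 - x / a), ((x, y) : ℝ × ℝ) ∈ U :=
      fun y hy => hΩU (hYmem x hx y hy)
    have hft := intervalIntegral.integral_eq_sub_of_hasDerivAt
      (f := fun y => u (x, y) * FY u (x, y))
      (f' := fun y => FY u (x, y) * FY u (x, y) + u (x, y) * FY (FY u) (x, y))
      (a := 0) (b := 1 - x / a) ?_ ?_
    · rw [hft, hu_hyp x hx, hu_bot x hx, zero_mul, zero_mul, sub_zero]
    · intro y hy
      rw [huI] at hy
      exact (hasDerivAt_slice_y (hdU _ (hmemU y hy))).mul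
        (hasDerivAt_slice_y (hduyU _ (hmemU y hy)))
    · apply ContinuousOn.intervalIntegrable
      rw [huI]
      exact ((contOn_slice_y hcuy hmemU).mul (contOn_slice_y hcuy hmemU)).add
        ((contOn_slice_y hcu hmemU).mul (contOn_slice_y hcuyy hmemU))
  -- FTC for the P-term
  have hFTCP : ∀ y ∈ Icc (0:ℝ) 1, ∫ x in (0:ℝ)..(a * (1 - y)),
      (y * (FX (FX u) (x, y) * FY u (x, y) + FX u (x, y) * FX (FY u) (x, y)))
      = y * (FX u (a * (1 - y), y) * FY u (a * (1 - y), y)) := by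
    intro y hy
    have hXy : (0:ℝ) ≤ a * (1 - y) := mul_nonneg ha.le (by linarith [hy.2])
    have huI : uIcc (0:ℝ) (a * (1 - y)) = Icc 0 (a * (1 - y)) := uIcc_of_le hXy
    have hmemU : ∀ x ∈ Icc (0:ℝ) (a * (1 - y)), ((x, y) : ℝ × ℝ) ∈ U :=
      fun x hx => hΩU (hXmem y hy x hx)
    have hft := intervalIntegral.integral_eq_sub_of_hasDerivAt
      (f := fun x => y * (FX u (x, y) * FY u (x, y)))
      (f' := fun x => y * (FX (FX u) (x, y) * FY u (x, y) + FX u (x, y) * FX (FY u) (x, y)))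
      (a := 0) (b := a * (1 - y)) ?_ ?_
    · rw [hft, huy_left y hy, mul_zero, mul_zero, sub_zero]
    · intro x hx
      rw [huI] at hx
      exact ((hasDerivAt_slice_x (hduxU _ (hmemU x hx))).mul
        (hasDerivAt_slice_x (hduyU _ (hmemU x hx)))).const_mul y
    · apply ContinuousOn.intervalIntegrable
      rw [huI]
      exact continuousOn_const.mul (((contOn_slice_x hcuxx hmemU).mul
        (contOn_slice_x hcuy hmemU)).add ((contOn_slice_x hcux hmemU).mul
        (contOn_slice_x hcuyx hmemU)))
  -- continuity of A and DA
  have hcA : ContinuousOn (Afun u h) U := by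
    unfold Afun
    exact ((hcuy.mul hcuy).sub (((hcux.mul hcux).add (hcuy.mul hcuy)).div_const 2)).add
      ((hcu.mul hcu).div_const (2 * h ^ 2))
  have hcDA : ContinuousOn (DAfun u h) U := by
    unfold DAfun
    exact (((hcuyy.mul hcuy).add (hcuy.mul hcuyy)).sub
      ((((hcuxy.mul hcux).add (hcux.mul hcuxy)).add
        ((hcuyy.mul hcuy).add (hcuy.mul hcuyy))).div_const 2)).add
      (((hcuy.mul hcu).add (hcu.mul hcuy)).div_const (2 * h ^ 2))
  -- FTC for the Q-term
  have hFTCQ : ∀ x ∈ Icc (0:ℝ) a, ∫ y in (0:ℝ)..(1 - x / a),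
      (1 * Afun u h (x, y) + y * DAfun u h (x, y))
      = (1 - x / a) * Afun u h (x, 1 - x / a) := by
    intro x hx
    have hYx : (0:ℝ) ≤ 1 - x / a := by rw [sub_nonneg, div_le_one ha]; exact hx.2
    have huI : uIcc (0:ℝ) (1 - x / a) = Icc 0 (1 - x / a) := uIcc_of_le hYx
    have hmemU : ∀ y ∈ Icc (0:ℝ) (1 - x / a), ((x, y) : ℝ × ℝ) ∈ U :=
      fun y hy => hΩU (hYmem x hx y hy)
    have hft := intervalIntegral.integral_eq_sub_of_hasDerivAt
      (f := fun y => y * Afun u h (x, y))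
      (f' := fun y => 1 * Afun u h (x, y) + y * DAfun u h (x, y))
      (a := 0) (b := 1 - x / a) ?_ ?_
    · rw [hft, zero_mul, sub_zero]
    · intro y hy
      rw [huI] at hy
      exact (hasDerivAt_id y).mul (hasDerivAt_A_slice (hdU _ (hmemU y hy))
        (hduxU _ (hmemU y hy)) (hduyU _ (hmemU y hy)))
    · apply ContinuousOn.intervalIntegrable
      rw [huI]
      exact (continuousOn_const.mul (contOn_slice_y hcA hmemU)).add
        (continuousOn_id.mul (contOn_slice_y hcDA hmemU))
  -- integrability over the triangle
  have hint : ∀ {F : ℝ × ℝ → ℝ}, ContinuousOn F U → IntegrableOn F (Omg a) :=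
    fun {F} hF => (hF.mono hΩU).integrableOn_compact hcomp
  have hi1 : IntegrableOn (fun p => FX u p * FX u p) (Omg a) := hint (hcux.mul hcux)
  have hi2 : IntegrableOn (fun p => FY u p * FY u p) (Omg a) := hint (hcuy.mul hcuy)
  have hi3 : IntegrableOn (fun p => u p * FX (FX u) p) (Omg a) := hint (hcu.mul hcuxx)
  have hi4 : IntegrableOn (fun p => u p * FY (FY u) p) (Omg a) := hint (hcu.mul hcuyy)
  have hi5 : IntegrableOn (fun p => u p * u p) (Omg a) := hint (hcu.mul hcu)
  have hcP : ContinuousOn (fun p : ℝ × ℝ =>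
      p.2 * (FX (FX u) p * FY u p + FX u p * FX (FY u) p)) U :=
    continuous_snd.continuousOn.mul ((hcuxx.mul hcuy).add (hcux.mul hcuyx))
  have hcQ : ContinuousOn (fun p : ℝ × ℝ => 1 * Afun u h p + p.2 * DAfun u h p) U :=
    (continuousOn_const.mul hcA).add (continuous_snd.continuousOn.mul hcDA)
  have hiP := hint hcP
  have hiQ := hint hcQ
  -- energy identities from IBP
  have hSAx : ∫ p in Omg a, (FX u p * FX u p + u p * FX (FX u) p) = 0 := by
    have h0 : ∫ y in (0:ℝ)..1, (∫ x in (0:ℝ)..(a * (1 - y)),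
        (FX u (x, y) * FX u (x, y) + u (x, y) * FX (FX u) (x, y))) = 0 := by
      rw [intervalIntegral.integral_congr (g := fun _ => (0:ℝ))
        (fun y hy => hIBPx y (by rwa [uIcc_of_le (by norm_num : (0:ℝ) ≤ 1)] at hy))]
      simp
    exact (fubini_y ha _ ((((hcux.mul hcux).add (hcu.mul hcuxx))).mono hΩU)).trans h0
  have hSAy : ∫ p in Omg a, (FY u p * FY u p + u p * FY (FY u) p) = 0 := by
    have h0 : ∫ x in (0:ℝ)..a, (∫ y in (0:ℝ)..(1 - x / a),
        (FY u (x, y) * FY u (x, y) + u (x, y) * FY (FY u) (x, y))) = 0 := by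
      rw [intervalIntegral.integral_congr (g := fun _ => (0:ℝ))
        (fun x hx => hIBPy x (by rwa [uIcc_of_le ha.le] at hx))]
      simp
    exact (fubini_x ha _ ((((hcuy.mul hcuy).add (hcu.mul hcuyy))).mono hΩU)).trans h0
  have hI1 : ∫ p in Omg a, FX u p * FX u p = - ∫ p in Omg a, u p * FX (FX u) p := by
    rw [integral_add hi1 hi3] at hSAx; linarith
  have hI2 : ∫ p in Omg a, FY u p * FY u p = - ∫ p in Omg a, u p * FY (FY u) p := by
    rw [integral_add hi2 hi4] at hSAy; linarith
  have huu : ∫ p in Omg a, u p * u p = 1 := by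
    rw [← hnorm]; exact setIntegral_congr_fun hms (fun p _ => by ring)
  have hEnergy : h ^ 2 * ((∫ p in Omg a, FX u p * FX u p)
      + (∫ p in Omg a, FY u p * FY u p)) = 1 := by
    have e : ∫ p in Omg a, u p * u p
        = ∫ p in Omg a, (-h ^ 2) * (u p * FX (FX u) p + u p * FY (FY u) p) :=
      setIntegral_congr_fun hms (fun p hp => by
        have hp1 := heig p hp; linear_combination (-(u p)) * hp1)
    have e2 : (1:ℝ) = -h ^ 2 * ((∫ p in Omg a, u p * FX (FX u) p)
        + ∫ p in Omg a, u p * FY (FY u) p) := by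
      rw [← huu, e, integral_const_mul, integral_add hi3 hi4]
    linear_combination (-1 : ℝ) * e2 + h ^ 2 * hI1 + h ^ 2 * hI2
  -- Rellich combination
  have hPQ : (∫ p in Omg a, p.2 * (FX (FX u) p * FY u p + FX u p * FX (FY u) p))
      + (∫ p in Omg a, (1 * Afun u h p + p.2 * DAfun u h p))
      = ∫ p in Omg a, Afun u h p := by
    rw [← integral_add hiP hiQ]
    apply setIntegral_congr_fun hms
    intro p hp
    have h1 := heig p hp
    have h2 := hsymm p (hΩU hp)
    have h1b : u p / h ^ 2 = -(FX (FX u) p + FY (FY u) p) := by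
      rw [← h1]; field_simp
    unfold Afun DAfun
    linear_combination (p.2 * FY u p) * h1b - (p.2 * FX u p) * h2
  have hAval : ∫ p in Omg a, Afun u h p = ∫ p in Omg a, FY u p * FY u p := by
    have e : ∫ p in Omg a, Afun u h p
        = (∫ p in Omg a, FY u p * FY u p)
          - ((∫ p in Omg a, FX u p * FX u p) + ∫ p in Omg a, FY u p * FY u p) / 2
          + (∫ p in Omg a, u p * u p) / (2 * h ^ 2) := by
      have hiA1 : IntegrableOn (fun p =>
          FY u p * FY u p - (FX u p * FX u p + FY u p * FY u p) / 2) (Omg a) :=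
        hint ((hcuy.mul hcuy).sub (((hcux.mul hcux).add (hcuy.mul hcuy)).div_const 2))
      have hiA2 : IntegrableOn (fun p => u p * u p / (2 * h ^ 2)) (Omg a) :=
        hint ((hcu.mul hcu).div_const _)
      have hiA3 : IntegrableOn (fun p =>
          (FX u p * FX u p + FY u p * FY u p) / 2) (Omg a) :=
        hint (((hcux.mul hcux).add (hcuy.mul hcuy)).div_const 2)
      unfold Afun
      rw [integral_add hiA1 hiA2, integral_sub hi2 hiA3, integral_div, integral_div,
        integral_add hi1 hi2]
    rw [huu] at e
    have hE2 : (1:ℝ) / (2 * h ^ 2) = ((∫ p in Omg a, FX u p * FX u p)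
        + ∫ p in Omg a, FY u p * FY u p) / 2 := by
      rw [← hEnergy]; field_simp
    linear_combination e + hE2
  -- evaluate the boundary terms via Fubini
  have hPval : (∫ p in Omg a, p.2 * (FX (FX u) p * FY u p + FX u p * FX (FY u) p))
      = ∫ y in (0:ℝ)..1, y * (FX u (a * (1 - y), y) * FY u (a * (1 - y), y)) := by
    refine (fubini_y ha _ (hcP.mono hΩU)).trans ?_
    apply intervalIntegral.integral_congr
    intro y hy
    rw [uIcc_of_le (by norm_num : (0:ℝ) ≤ 1)] at hy
    exact hFTCP y hy
  have hQval : (∫ p in Omg a, (1 * Afun u h p + p.2 * DAfun u h p))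
      = ∫ x in (0:ℝ)..a, (1 - x / a) * Afun u h (x, 1 - x / a) := by
    refine (fubini_x ha _ (hcQ.mono hΩU)).trans ?_
    apply intervalIntegral.integral_congr
    intro x hx
    rw [uIcc_of_le ha.le] at hx
    exact hFTCQ x hx
  -- the hypotenuse weight function
  set ψ : ℝ → ℝ := fun x => (1 - x / a) * (FY u (x, 1 - x / a) * FY u (x, 1 - x / a)) with hψ
  have hcψ : ContinuousOn ψ (Icc (0:ℝ) a) := by
    rw [hψ]
    exact (continuousOn_const.sub (continuous_id.div_const a).continuousOn).mul
      ((contOn_slice_hyp hcuy (fun t ht => hΩU (hmem_hyp t ht))).mul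
        (contOn_slice_hyp hcuy (fun t ht => hΩU (hmem_hyp t ht))))
  have hPbd : ∫ y in (0:ℝ)..1, y * (FX u (a * (1 - y), y) * FY u (a * (1 - y), y))
      = ∫ y in (0:ℝ)..1, a⁻¹ * ψ (a * (1 - y)) := by
    apply intervalIntegral.integral_congr
    intro y hy
    rw [uIcc_of_le (by norm_num : (0:ℝ) ≤ 1)] at hy
    have hx₀ : a * (1 - y) ∈ Icc (0:ℝ) a :=
      ⟨mul_nonneg ha.le (by linarith [hy.2]), by nlinarith [hy.1]⟩
    have key : 1 - (a * (1 - y)) / a = y := by field_simp; ring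
    have hrel := hhyp _ hx₀
    rw [key] at hrel
    rw [hψ]
    simp only []
    rw [key, hrel]
    ring
  have hsub : ∫ y in (0:ℝ)..1, ψ (a * (1 - y)) = a⁻¹ * ∫ x in (0:ℝ)..a, ψ x := by
    have hg : ∀ y ∈ uIcc (0:ℝ) 1, HasDerivAt (fun t : ℝ => a * (1 - t)) (-a) y := by
      intro y _
      have hd := ((hasDerivAt_id y).const_sub 1).const_mul a
      simpa using hd
    have himg : ContinuousOn ψ ((fun t : ℝ => a * (1 - t)) '' (uIcc (0:ℝ) 1)) := by
      apply hcψ.mono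
      rintro t ⟨y, hy, rfl⟩
      rw [uIcc_of_le (by norm_num : (0:ℝ) ≤ 1)] at hy
      show a * (1 - y) ∈ Icc (0:ℝ) a
      exact ⟨mul_nonneg ha.le (by linarith [hy.2]), by nlinarith [mul_nonneg ha.le hy.1]⟩
    have hcv := intervalIntegral.integral_comp_smul_deriv' hg continuousOn_const himg
    simp only [Function.comp, smul_eq_mul] at hcv
    rw [show a * (1 - (0:ℝ)) = a by ring, show a * (1 - (1:ℝ)) = 0 by ring] at hcv
    have e1 : ∫ y in (0:ℝ)..1, (-a) * ψ (a * (1 - y))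
        = -a * ∫ y in (0:ℝ)..1, ψ (a * (1 - y)) := intervalIntegral.integral_const_mul _ _
    have e2 : ∫ x in (a:ℝ)..(0:ℝ), ψ x = - ∫ x in (0:ℝ)..a, ψ x :=
      intervalIntegral.integral_symm 0 a
    have e3 : -a * (∫ y in (0:ℝ)..1, ψ (a * (1 - y))) = - ∫ x in (0:ℝ)..a, ψ x := by
      rw [← e1, hcv, e2]
    have e4 : a * (∫ y in (0:ℝ)..1, ψ (a * (1 - y))) = ∫ x in (0:ℝ)..a, ψ x := by
      linarith [e3]
    field_simp
    linarith [e4]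
  have hQbd : ∫ x in (0:ℝ)..a, (1 - x / a) * Afun u h (x, 1 - x / a)
      = ((a ^ 2 - 1) / (2 * a ^ 2)) * ∫ x in (0:ℝ)..a, ψ x := by
    rw [← intervalIntegral.integral_const_mul]
    apply intervalIntegral.integral_congr
    intro x hx
    rw [uIcc_of_le ha.le] at hx
    have hrel := hhyp x hx
    have hu0 := hu_hyp x hx
    rw [hψ]
    simp only []
    unfold Afun
    rw [hrel, hu0]
    field_simp
    ring
  -- final assembly
  have hTfin : ∫ p in Omg a, FY u p * FY u p
      = ((a ^ 2 + 1) / (2 * a ^ 2)) * ∫ x in (0:ℝ)..a, ψ x := by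
    rw [← hAval, ← hPQ, hPval, hQval, hPbd, hQbd, intervalIntegral.integral_const_mul, hsub]
    field_simp
    ring
  -- rewrite the goal
  have hLHS : ∫ p in Omg a, (h * FX u p) ^ 2
      = h ^ 2 * ∫ p in Omg a, FX u p * FX u p := by
    rw [← integral_const_mul]
    exact setIntegral_congr_fun hms (fun p _ => by ring)
  have hsq : ∀ c : ℝ, ((Real.sqrt (1 + a ^ 2))⁻¹ * c) ^ 2 = c ^ 2 / (1 + a ^ 2) := by
    intro c
    rw [mul_pow, inv_pow, Real.sq_sqrt (by positivity : (0:ℝ) ≤ 1 + a ^ 2)]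
    rw [div_eq_mul_inv, mul_comm]
  have hRHS : ∫ x in (0:ℝ)..a,
      (1 - x / a) * (h * ((Real.sqrt (1 + a ^ 2))⁻¹ *
        (FX u (x, 1 - x / a) + a * FY u (x, 1 - x / a)))) ^ 2
      = (h ^ 2 * (1 + a ^ 2) / a ^ 2) * ∫ x in (0:ℝ)..a, ψ x := by
    rw [← intervalIntegral.integral_const_mul]
    apply intervalIntegral.integral_congr
    intro x hx
    rw [uIcc_of_le ha.le] at hx
    have hrel := hhyp x hx
    rw [hψ]
    simp only []
    rw [hrel, mul_pow, hsq]
    field_simp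
  rw [hLHS, hRHS]
  linear_combination hEnergy - h ^ 2 * hTfin
end

section
/- Let Ω be the right triangle {(x,y) : 0 ≤ x ≤ a, 0 ≤ y ≤ 1 − x/a} with a > 0. Let (u_j) be a sequence of real-valued functions, each C² on an open neighborhood of Ω, and (h_j) positive reals with h_j → 0, such that for each j: −h_j²Δu_j = u_j on Ω, u_j = 0 on ∂Ω, and ∫_Ω u_j² dV = 1. Assume that for every open axis-aligned rectangle R ⊂ ℝ², ∫_{Ω∩R} u_j² dV → Area(Ω∩R)/Area(Ω) as j → ∞. Then liminf_{j→∞} ∫_Ω |h_j ∂_x u_j|² dV ≥ 1/8. -/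
open Real MeasureTheory Filter

namespace XEnergy

lemma omg_mem_iff {a : ℝ} (ha : 0 < a) {p : ℝ × ℝ} :
    p ∈ Omg a ↔ p.2 ∈ Set.Icc (0:ℝ) 1 ∧ p.1 ∈ Set.Icc 0 (a * (1 - p.2)) := by
  simp only [Omg, Set.mem_setOf_eq, Set.mem_Icc]
  constructor
  · rintro ⟨h1, h2, h3, h4⟩
    have hd : p.1 / a ≤ 1 - p.2 := by linarith
    have hx : p.1 ≤ (1 - p.2) * a := (div_le_iff₀ ha).mp hd
    have h0 : 0 ≤ p.1 / a := div_nonneg h1 ha.le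
    exact ⟨⟨h3, by linarith⟩, ⟨h1, by nlinarith⟩⟩
  · rintro ⟨⟨h1, h2⟩, h3, h4⟩
    have hd : p.1 / a ≤ 1 - p.2 := (div_le_iff₀ ha).mpr (by nlinarith)
    refine ⟨h3, by nlinarith, h1, by linarith⟩

lemma omg_mem_iff' {a : ℝ} (ha : 0 < a) {p : ℝ × ℝ} :
    p ∈ Omg a ↔ p.1 ∈ Set.Icc (0:ℝ) a ∧ p.2 ∈ Set.Icc 0 (1 - p.1 / a) := by
  simp only [Omg, Set.mem_setOf_eq, Set.mem_Icc]
  tauto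

lemma isClosed_omg {a : ℝ} : IsClosed (Omg a) := by
  have h1 : IsClosed {p : ℝ × ℝ | 0 ≤ p.1} := isClosed_le continuous_const continuous_fst
  have h2 : IsClosed {p : ℝ × ℝ | p.1 ≤ a} := isClosed_le continuous_fst continuous_const
  have h3 : IsClosed {p : ℝ × ℝ | 0 ≤ p.2} := isClosed_le continuous_const continuous_snd
  have h4 : IsClosed {p : ℝ × ℝ | p.2 ≤ 1 - p.1 / a} :=
    isClosed_le continuous_snd (continuous_const.sub (continuous_fst.div_const a))
  exact h1.inter (h2.inter (h3.inter h4))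

lemma omg_subset_box {a : ℝ} (ha : 0 < a) : Omg a ⊆ Set.Icc ((0:ℝ), (0:ℝ)) (a, 1) := by
  intro p hp
  rw [omg_mem_iff ha] at hp
  obtain ⟨⟨h1, h2⟩, h3, h4⟩ := hp
  constructor
  · exact ⟨h3, h1⟩
  · exact ⟨by nlinarith, h2⟩

lemma isCompact_omg {a : ℝ} (ha : 0 < a) : IsCompact (Omg a) :=
  isCompact_Icc.of_isClosed_subset isClosed_omg (omg_subset_box ha)

lemma measurableSet_omg {a : ℝ} : MeasurableSet (Omg a) := isClosed_omg.measurableSet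

lemma mem_frontier_omg {a : ℝ} (ha : 0 < a) {p : ℝ × ℝ} (hp : p ∈ Omg a)
    (hc : p.1 = 0 ∨ p.2 = 0 ∨ p.2 = 1 - p.1 / a) : p ∈ frontier (Omg a) := by
  rw [isClosed_omg.frontier_eq]
  refine ⟨hp, fun hint => ?_⟩
  rw [mem_interior_iff_mem_nhds, Metric.mem_nhds_iff] at hint
  obtain ⟨ε, hε, hball⟩ := hint
  have hdist : ∀ q : ℝ × ℝ, dist q.1 p.1 < ε → dist q.2 p.2 < ε → q ∈ Omg a := by
    intro q h1 h2
    exact hball (by rw [Metric.mem_ball, Prod.dist_eq]; exact max_lt h1 h2)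
  have hself : ∀ t : ℝ, dist t t < ε := by intro t; rw [dist_self]; exact hε
  have habs : dist (-(ε/2) : ℝ) 0 < ε := by
    rw [Real.dist_eq, sub_zero, abs_neg, abs_of_nonneg (by linarith)]; linarith
  rcases hc with hc | hc | hc
  · have hq : ((-(ε/2), p.2) : ℝ × ℝ) ∈ Omg a := hdist _ (by rw [← hc] at habs; exact habs) (hself _)
    have := hq.1; simp only at this; linarith
  · have hq : ((p.1, -(ε/2)) : ℝ × ℝ) ∈ Omg a := hdist _ (hself _) (by rw [← hc] at habs; exact habs)
    have := hq.2.2.1; simp only at this; linarith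
  · have hq : ((p.1, p.2 + ε/2) : ℝ × ℝ) ∈ Omg a := by
      refine hdist _ (hself _) ?_
      rw [Real.dist_eq]
      rw [show p.2 + ε/2 - p.2 = ε/2 by ring, abs_of_nonneg (by linarith)]; linarith
    have := hq.2.2.2; simp only at this; linarith


lemma integral_linear_icc {a c d e : ℝ} (hce : c ≤ e) :
    ∫ x in Set.Icc c e, (d - x / a) = (d*e - e^2/(2*a)) - (d*c - c^2/(2*a)) := by
  rw [MeasureTheory.integral_Icc_eq_integral_Ioc, ← intervalIntegral.integral_of_le hce]
  refine intervalIntegral.integral_eq_sub_of_hasDerivAt (f := fun t : ℝ => d*t - t^2/(2*a)) (fun x _ => ?_) ?_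
  · have H : HasDerivAt (fun t : ℝ => d*t - t^2/(2*a)) (d*1 - 2*x^1/(2*a)) x :=
      ((hasDerivAt_id x).const_mul d).sub ((hasDerivAt_pow 2 x).div_const (2*a))
    refine H.congr_deriv ?_
    rcases eq_or_ne a 0 with h | h
    · simp [h]
    · rw [mul_one, pow_one, mul_div_mul_left _ _ (two_ne_zero' ℝ)]
  · exact Continuous.intervalIntegrable (u := fun x : ℝ => d - x / a) (by fun_prop) _ _

lemma volume_slice_general {a : ℝ} (ha : 0 < a) {S : Set (ℝ × ℝ)} (hS : MeasurableSet S)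
    {c e d : ℝ} (hce : c ≤ e) (hd : ∀ x ∈ Set.Icc c e, 0 ≤ d - x / a)
    (hslice : ∀ x : ℝ, volume (Prod.mk x ⁻¹' S)
      = Set.indicator (Set.Icc c e) (fun x => ENNReal.ofReal (d - x / a)) x) :
    volume S = ENNReal.ofReal ((d*e - e^2/(2*a)) - (d*c - c^2/(2*a))) := by
  rw [MeasureTheory.Measure.volume_eq_prod, MeasureTheory.Measure.prod_apply hS]
  simp only [hslice]
  rw [MeasureTheory.lintegral_indicator measurableSet_Icc]
  rw [← MeasureTheory.ofReal_integral_eq_lintegral_ofReal]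
  · rw [integral_linear_icc (a := a) hce]
  · exact (Continuous.integrableOn_Icc (by fun_prop))
  · exact (ae_restrict_iff' measurableSet_Icc).mpr (ae_of_all _ hd)

lemma volume_omg {a : ℝ} (ha : 0 < a) : volume (Omg a) = ENNReal.ofReal (a / 2) := by
  have h := volume_slice_general (a := a) ha measurableSet_omg (c := 0) (e := a) (d := 1)
    ha.le (fun x hx => by
      have : x / a ≤ 1 := (div_le_one ha).mpr hx.2
      linarith)
    (fun x => by
      rcases le_or_gt 0 x with hx0 | hx0
      · rcases le_or_gt x a with hxa | hxa
        · have : Prod.mk x ⁻¹' Omg a = Set.Icc 0 (1 - x / a) := by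
            ext y
            simp only [Set.mem_preimage, Set.mem_Icc]
            rw [omg_mem_iff' ha]
            simp [Set.mem_Icc, hx0, hxa]
          rw [this, Real.volume_Icc, Set.indicator_of_mem (Set.mem_Icc.mpr ⟨hx0, hxa⟩) _, sub_zero]
        · have : Prod.mk x ⁻¹' Omg a = ∅ := by
            ext y
            simp only [Set.mem_preimage, Set.mem_empty_iff_false, iff_false]
            intro hy
            rw [omg_mem_iff' ha] at hy
            exact absurd hy.1.2 (not_le.mpr hxa)
          rw [this, Set.indicator_of_notMem (by simp [not_le.mpr hxa])]
          simp
      · have : Prod.mk x ⁻¹' Omg a = ∅ := by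
          ext y
          simp only [Set.mem_preimage, Set.mem_empty_iff_false, iff_false]
          intro hy
          rw [omg_mem_iff' ha] at hy
          exact absurd hy.1.1 (not_le.mpr hx0)
        rw [this, Set.indicator_of_notMem (by simp [not_le.mpr hx0])]
        simp)
  rw [h]
  congr 1
  field_simp
  ring

lemma omg_slab_eq {a : ℝ} (ha : 0 < a) {t : ℝ} (ht : 0 ≤ t) :
    Omg a ∩ (Set.Ioo (-1) (a+1) ×ˢ Set.Ioo t 2)
      = {p : ℝ × ℝ | p ∈ Omg a ∧ t < p.2} := by
  ext p
  simp only [Set.mem_inter_iff, Set.mem_prod, Set.mem_Ioo, Set.mem_setOf_eq]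
  constructor
  · rintro ⟨hp, _, hy, _⟩; exact ⟨hp, hy⟩
  · rintro ⟨hp, hy⟩
    obtain ⟨⟨hy0, hy1⟩, hx0, hx1⟩ := (omg_mem_iff ha).mp hp
    refine ⟨hp, ⟨by linarith, by nlinarith⟩, hy, by linarith⟩

lemma measurableSet_omg_slab {a t : ℝ} :
    MeasurableSet {p : ℝ × ℝ | p ∈ Omg a ∧ t < p.2} := by
  refine (measurableSet_omg).inter ?_
  exact measurableSet_lt measurable_const measurable_snd

lemma volume_omg_slab {a : ℝ} (ha : 0 < a) {t : ℝ} (ht : t ∈ Set.Ico (0:ℝ) 1) :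
    volume {p : ℝ × ℝ | p ∈ Omg a ∧ t < p.2} = ENNReal.ofReal (a * (1-t)^2 / 2) := by
  have h1t : (0:ℝ) < 1 - t := by linarith [ht.2]
  have hae : 0 ≤ a * (1-t) := by positivity
  have h := volume_slice_general (a := a) ha (measurableSet_omg_slab (a := a) (t := t))
    (c := 0) (e := a*(1-t)) (d := 1 - t)
    hae (fun x hx => by
      have : x / a ≤ 1 - t := by
        rw [div_le_iff₀ ha]; nlinarith [hx.2]
      linarith)
    (fun x => by
      have hslice : Prod.mk x ⁻¹' {p : ℝ × ℝ | p ∈ Omg a ∧ t < p.2}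
          = {y : ℝ | ((x,y) ∈ Omg a) ∧ t < y} := rfl
      rcases le_or_gt 0 x with hx0 | hx0
      · rcases le_or_gt x (a*(1-t)) with hxa | hxa
        · have hxa' : x ≤ a := by nlinarith [mul_nonneg ha.le ht.1]
          have : Prod.mk x ⁻¹' {p : ℝ × ℝ | p ∈ Omg a ∧ t < p.2} = Set.Ioc t (1 - x/a) := by
            rw [hslice]
            ext y
            simp only [Set.mem_setOf_eq, Set.mem_Ioc]
            rw [omg_mem_iff' ha]
            simp only [Set.mem_Icc]
            constructor
            · rintro ⟨⟨_, hy⟩, hty⟩; exact ⟨hty, hy.2⟩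
            · rintro ⟨hty, hy⟩
              exact ⟨⟨⟨hx0, hxa'⟩, ⟨by linarith [ht.1], hy⟩⟩, hty⟩
          rw [this, Real.volume_Ioc, Set.indicator_of_mem (Set.mem_Icc.mpr ⟨hx0, hxa⟩) _]
          congr 1
          ring
        · have hempty : Prod.mk x ⁻¹' {p : ℝ × ℝ | p ∈ Omg a ∧ t < p.2} = ∅ := by
            rw [hslice]
            ext y
            simp only [Set.mem_setOf_eq, Set.mem_empty_iff_false, iff_false, not_and]
            intro hy hty
            obtain ⟨_, hy2⟩ := ((omg_mem_iff' ha).mp hy).2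
            have : x / a ≤ 1 - y := by linarith
            rw [div_le_iff₀ ha] at this
            nlinarith
          rw [hempty, Set.indicator_of_notMem (by simp [not_le.mpr hxa])]
          simp
      · have hempty : Prod.mk x ⁻¹' {p : ℝ × ℝ | p ∈ Omg a ∧ t < p.2} = ∅ := by
          rw [hslice]
          ext y
          simp only [Set.mem_setOf_eq, Set.mem_empty_iff_false, iff_false, not_and]
          intro hy _
          exact absurd (((omg_mem_iff' ha).mp hy).1.1) (not_le.mpr hx0)
        rw [hempty, Set.indicator_of_notMem (by simp [not_le.mpr hx0])]
        simp)
  rw [h]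
  congr 1
  field_simp
  ring


lemma slice_x {a : ℝ} (ha : 0 < a) (F DF : ℝ × ℝ → ℝ)
    (hD : ∀ p ∈ Omg a, HasDerivAt (fun t => F (t, p.2)) (DF p) p.1)
    (hDc : ContinuousOn DF (Omg a)) :
    ∫ p in Omg a, DF p = ∫ y in (0:ℝ)..1, (F (a*(1-y), y) - F (0, y)) := by
  have hInt : IntegrableOn DF (Omg a) := hDc.integrableOn_compact (isCompact_omg ha)
  have hInd : Integrable (Set.indicator (Omg a) DF) (volume.prod volume) := by
    rw [← MeasureTheory.Measure.volume_eq_prod]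
    exact (integrable_indicator_iff measurableSet_omg).mpr hInt
  have h1 : ∫ p in Omg a, DF p = ∫ p : ℝ × ℝ, Set.indicator (Omg a) DF p :=
    (integral_indicator measurableSet_omg).symm
  have h2 : ∫ p : ℝ × ℝ, Set.indicator (Omg a) DF p
      = ∫ y : ℝ, (∫ x : ℝ, Set.indicator (Omg a) DF (x, y)) := by
    rw [MeasureTheory.Measure.volume_eq_prod]
    exact MeasureTheory.integral_prod_symm _ hInd
  set inn : ℝ → ℝ := fun y => ∫ x : ℝ, Set.indicator (Omg a) DF (x, y) with hinn
  have hzero : ∀ y : ℝ, y ∉ Set.Icc (0:ℝ) 1 → inn y = 0 := by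
    intro y hy
    have : ∀ x : ℝ, Set.indicator (Omg a) DF (x, y) = 0 := by
      intro x
      refine Set.indicator_of_notMem (fun hmem => hy ?_) _
      exact ((omg_mem_iff ha).mp hmem).1
    simp only [hinn, this, integral_zero]
  have hval : ∀ y ∈ Set.Ioo (0:ℝ) 1, inn y = F (a*(1-y), y) - F (0, y) := by
    intro y hy
    have hy' : y ∈ Set.Icc (0:ℝ) 1 := ⟨hy.1.le, hy.2.le⟩
    have hl : (0:ℝ) ≤ a * (1 - y) := by nlinarith [hy.1, hy.2]
    have hset : (fun x => Set.indicator (Omg a) DF (x, y))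
        = Set.indicator (Set.Icc 0 (a*(1-y))) (fun x => DF (x, y)) := by
      funext x
      by_cases hx : x ∈ Set.Icc (0:ℝ) (a*(1-y))
      · rw [Set.indicator_of_mem hx,
          Set.indicator_of_mem (by rw [omg_mem_iff ha]; exact ⟨hy', hx⟩) _]
      · rw [Set.indicator_of_notMem hx,
          Set.indicator_of_notMem (fun hmem => hx ((omg_mem_iff ha).mp hmem).2) _]
    have hmaps : ∀ x ∈ Set.Icc (0:ℝ) (a*(1-y)), ((x, y) : ℝ × ℝ) ∈ Omg a := by
      intro x hx
      rw [omg_mem_iff ha]; exact ⟨hy', hx⟩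
    have hcont : ContinuousOn (fun x => DF (x, y)) (Set.Icc (0:ℝ) (a*(1-y))) := by
      refine ContinuousOn.comp hDc ?_ ?_
      · exact (Continuous.continuousOn (by fun_prop))
      · intro x hx; exact hmaps x hx
    calc inn y = ∫ x in Set.Icc (0:ℝ) (a*(1-y)), DF (x, y) := by
          rw [hinn]; simp only [hset]; exact integral_indicator measurableSet_Icc
      _ = ∫ x in (0:ℝ)..(a*(1-y)), DF (x, y) := by
          rw [MeasureTheory.integral_Icc_eq_integral_Ioc, ← intervalIntegral.integral_of_le hl]
      _ = F (a*(1-y), y) - F (0, y) := by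
          refine intervalIntegral.integral_eq_sub_of_hasDerivAt
            (f := fun t => F (t, y)) (fun x hx => ?_) ?_
          · rw [Set.uIcc_of_le hl] at hx
            exact hD (x, y) (hmaps x hx)
          · refine ContinuousOn.intervalIntegrable ?_
            rw [Set.uIcc_of_le hl]
            exact hcont
  have hindic : inn = Set.indicator (Set.Icc (0:ℝ) 1) inn := by
    funext y
    by_cases hy : y ∈ Set.Icc (0:ℝ) 1
    · rw [Set.indicator_of_mem hy]
    · rw [Set.indicator_of_notMem hy, hzero y hy]
  rw [h1, h2, hindic, integral_indicator measurableSet_Icc,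
    MeasureTheory.integral_Icc_eq_integral_Ioo]
  rw [intervalIntegral.integral_of_le (zero_le_one), MeasureTheory.integral_Ioc_eq_integral_Ioo]
  exact MeasureTheory.setIntegral_congr_fun measurableSet_Ioo (fun y hy => hval y hy)

lemma slice_y {a : ℝ} (ha : 0 < a) (G DG : ℝ × ℝ → ℝ)
    (hD : ∀ p ∈ Omg a, HasDerivAt (fun t => G (p.1, t)) (DG p) p.2)
    (hDc : ContinuousOn DG (Omg a)) :
    ∫ p in Omg a, DG p = ∫ x in (0:ℝ)..a, (G (x, 1 - x/a) - G (x, 0)) := by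
  have hInt : IntegrableOn DG (Omg a) := hDc.integrableOn_compact (isCompact_omg ha)
  have hInd : Integrable (Set.indicator (Omg a) DG) (volume.prod volume) := by
    rw [← MeasureTheory.Measure.volume_eq_prod]
    exact (integrable_indicator_iff measurableSet_omg).mpr hInt
  have h1 : ∫ p in Omg a, DG p = ∫ p : ℝ × ℝ, Set.indicator (Omg a) DG p :=
    (integral_indicator measurableSet_omg).symm
  have h2 : ∫ p : ℝ × ℝ, Set.indicator (Omg a) DG p
      = ∫ x : ℝ, (∫ y : ℝ, Set.indicator (Omg a) DG (x, y)) := by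
    rw [MeasureTheory.Measure.volume_eq_prod]
    exact MeasureTheory.integral_prod _ hInd
  set inn : ℝ → ℝ := fun x => ∫ y : ℝ, Set.indicator (Omg a) DG (x, y) with hinn
  have hzero : ∀ x : ℝ, x ∉ Set.Icc (0:ℝ) a → inn x = 0 := by
    intro x hx
    have : ∀ y : ℝ, Set.indicator (Omg a) DG (x, y) = 0 := by
      intro y
      refine Set.indicator_of_notMem (fun hmem => hx ?_) _
      exact ((omg_mem_iff' ha).mp hmem).1
    simp only [hinn, this, integral_zero]
  have hval : ∀ x ∈ Set.Ioo (0:ℝ) a, inn x = G (x, 1 - x/a) - G (x, 0) := by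
    intro x hx
    have hx' : x ∈ Set.Icc (0:ℝ) a := ⟨hx.1.le, hx.2.le⟩
    have hl : (0:ℝ) ≤ 1 - x/a := by
      have : x / a ≤ 1 := (div_le_one ha).mpr hx.2.le
      linarith
    have hset : (fun y => Set.indicator (Omg a) DG (x, y))
        = Set.indicator (Set.Icc 0 (1 - x/a)) (fun y => DG (x, y)) := by
      funext y
      by_cases hy : y ∈ Set.Icc (0:ℝ) (1 - x/a)
      · rw [Set.indicator_of_mem hy,
          Set.indicator_of_mem (by rw [omg_mem_iff' ha]; exact ⟨hx', hy⟩) _]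
      · rw [Set.indicator_of_notMem hy,
          Set.indicator_of_notMem (fun hmem => hy ((omg_mem_iff' ha).mp hmem).2) _]
    have hmaps : ∀ y ∈ Set.Icc (0:ℝ) (1 - x/a), ((x, y) : ℝ × ℝ) ∈ Omg a := by
      intro y hy
      rw [omg_mem_iff' ha]; exact ⟨hx', hy⟩
    have hcont : ContinuousOn (fun y => DG (x, y)) (Set.Icc (0:ℝ) (1 - x/a)) := by
      refine ContinuousOn.comp hDc ?_ ?_
      · exact (Continuous.continuousOn (by fun_prop))
      · intro y hy; exact hmaps y hy
    calc inn x = ∫ y in Set.Icc (0:ℝ) (1 - x/a), DG (x, y) := by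
          rw [hinn]; simp only [hset]; exact integral_indicator measurableSet_Icc
      _ = ∫ y in (0:ℝ)..(1 - x/a), DG (x, y) := by
          rw [MeasureTheory.integral_Icc_eq_integral_Ioc, ← intervalIntegral.integral_of_le hl]
      _ = G (x, 1 - x/a) - G (x, 0) := by
          refine intervalIntegral.integral_eq_sub_of_hasDerivAt
            (f := fun t => G (x, t)) (fun y hy => ?_) ?_
          · rw [Set.uIcc_of_le hl] at hy
            exact hD (x, y) (hmaps y hy)
          · refine ContinuousOn.intervalIntegrable ?_
            rw [Set.uIcc_of_le hl]
            exact hcont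
  have hindic : inn = Set.indicator (Set.Icc (0:ℝ) a) inn := by
    funext x
    by_cases hx : x ∈ Set.Icc (0:ℝ) a
    · rw [Set.indicator_of_mem hx]
    · rw [Set.indicator_of_notMem hx, hzero x hx]
  rw [h1, h2, hindic, integral_indicator measurableSet_Icc,
    MeasureTheory.integral_Icc_eq_integral_Ioo]
  rw [intervalIntegral.integral_of_le ha.le, MeasureTheory.integral_Ioc_eq_integral_Ioo]
  exact MeasureTheory.setIntegral_congr_fun measurableSet_Ioo (fun x hx => hval x hx)


lemma hasDerivAt_slice_fst {g : ℝ × ℝ → ℝ} {p : ℝ × ℝ} (hg : DifferentiableAt ℝ g p) :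
    HasDerivAt (fun t => g (t, p.2)) (fderiv ℝ g p (1, 0)) p.1 := by
  have h1 : HasDerivAt (fun t : ℝ => ((t, p.2) : ℝ × ℝ)) ((1:ℝ), (0:ℝ)) p.1 :=
    (hasDerivAt_id p.1).prodMk (hasDerivAt_const p.1 p.2)
  exact hg.hasFDerivAt.comp_hasDerivAt p.1 h1

lemma hasDerivAt_slice_snd {g : ℝ × ℝ → ℝ} {p : ℝ × ℝ} (hg : DifferentiableAt ℝ g p) :
    HasDerivAt (fun t => g (p.1, t)) (fderiv ℝ g p (0, 1)) p.2 := by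
  have h1 : HasDerivAt (fun t : ℝ => ((p.1, t) : ℝ × ℝ)) ((0:ℝ), (1:ℝ)) p.2 :=
    (hasDerivAt_const p.2 p.1).prodMk (hasDerivAt_id p.2)
  exact hg.hasFDerivAt.comp_hasDerivAt p.2 h1

section Reg

variable {a : ℝ} {U : Set (ℝ × ℝ)} {f : ℝ × ℝ → ℝ}

lemma diffAt_of_c2 (hU : IsOpen U) (hf : ContDiffOn ℝ 2 f U) {p : ℝ × ℝ} (hp : p ∈ U) :
    DifferentiableAt ℝ f p :=
  ((hf.differentiableOn (by norm_num)).differentiableAt (hU.mem_nhds hp))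

lemma contDiffOn_fx (hU : IsOpen U) (hf : ContDiffOn ℝ 2 f U) :
    ContDiffOn ℝ 1 (fun q => fderiv ℝ f q (1, 0)) U :=
  (hf.fderiv_of_isOpen hU (by norm_num)).clm_apply contDiffOn_const

lemma contDiffOn_fy (hU : IsOpen U) (hf : ContDiffOn ℝ 2 f U) :
    ContDiffOn ℝ 1 (fun q => fderiv ℝ f q (0, 1)) U :=
  (hf.fderiv_of_isOpen hU (by norm_num)).clm_apply contDiffOn_const

lemma diffAt_fx (hU : IsOpen U) (hf : ContDiffOn ℝ 2 f U) {p : ℝ × ℝ} (hp : p ∈ U) :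
    DifferentiableAt ℝ (fun q => fderiv ℝ f q (1, 0)) p :=
  (((contDiffOn_fx hU hf).differentiableOn (by norm_num)).differentiableAt (hU.mem_nhds hp))

lemma diffAt_fy (hU : IsOpen U) (hf : ContDiffOn ℝ 2 f U) {p : ℝ × ℝ} (hp : p ∈ U) :
    DifferentiableAt ℝ (fun q => fderiv ℝ f q (0, 1)) p :=
  (((contDiffOn_fy hU hf).differentiableOn (by norm_num)).differentiableAt (hU.mem_nhds hp))

/-- Symmetry of mixed second partial derivatives. -/
lemma mixed_symm (hU : IsOpen U) (hf : ContDiffOn ℝ 2 f U) {p : ℝ × ℝ} (hp : p ∈ U) :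
    fderiv ℝ (fun q => fderiv ℝ f q (1, 0)) p (0, 1)
      = fderiv ℝ (fun q => fderiv ℝ f q (0, 1)) p (1, 0) := by
  have hf' : DifferentiableAt ℝ (fderiv ℝ f) p :=
    (((hf.fderiv_of_isOpen hU (by norm_num : (1:WithTop ℕ∞) + 1 ≤ 2)).differentiableOn (by norm_num)).differentiableAt
      (hU.mem_nhds hp))
  have hev : ∀ᶠ q in nhds p, HasFDerivAt f (fderiv ℝ f q) q := by
    filter_upwards [hU.mem_nhds hp] with q hq
    exact (diffAt_of_c2 hU hf hq).hasFDerivAt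
  have hsymm := second_derivative_symmetric_of_eventually hev hf'.hasFDerivAt
  have h10 : HasFDerivAt (fun q => fderiv ℝ f q (1, 0))
      ((fderiv ℝ (fderiv ℝ f) p).flip ((1:ℝ), (0:ℝ))) p := by
    simpa using hf'.hasFDerivAt.clm_apply (hasFDerivAt_const ((1:ℝ),(0:ℝ)) p)
  have h01 : HasFDerivAt (fun q => fderiv ℝ f q (0, 1))
      ((fderiv ℝ (fderiv ℝ f) p).flip ((0:ℝ), (1:ℝ))) p := by
    simpa using hf'.hasFDerivAt.clm_apply (hasFDerivAt_const ((0:ℝ),(1:ℝ)) p)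
  rw [h10.fderiv, h01.fderiv]
  exact hsymm _ _

end Reg

section Edge

variable {a : ℝ} {U : Set (ℝ × ℝ)} {f : ℝ × ℝ → ℝ}

lemma edge_zero (ha : 0 < a) (hb : ∀ p ∈ frontier (Omg a), f p = 0) :
    ∀ p ∈ Omg a, (p.1 = 0 ∨ p.2 = 0 ∨ p.2 = 1 - p.1 / a) → f p = 0 :=
  fun p hp hc => hb p (mem_frontier_omg ha hp hc)

lemma mem_omg_left (ha : 0 < a) {y : ℝ} (hy : y ∈ Set.Icc (0:ℝ) 1) : ((0, y) : ℝ × ℝ) ∈ Omg a := by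
  refine ⟨le_refl 0, ha.le, hy.1, ?_⟩
  simp only [zero_div]
  linarith [hy.2]

lemma mem_omg_bottom (ha : 0 < a) {x : ℝ} (hx : x ∈ Set.Icc (0:ℝ) a) :
    ((x, 0) : ℝ × ℝ) ∈ Omg a := by
  refine ⟨hx.1, hx.2, le_refl 0, ?_⟩
  have : x / a ≤ 1 := (div_le_one ha).mpr hx.2
  simp only; linarith

lemma mem_omg_hyp (ha : 0 < a) {x : ℝ} (hx : x ∈ Set.Icc (0:ℝ) a) :
    ((x, 1 - x / a) : ℝ × ℝ) ∈ Omg a := by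
  have h1 : 0 ≤ x / a := div_nonneg hx.1 ha.le
  have h2 : x / a ≤ 1 := (div_le_one ha).mpr hx.2
  exact ⟨hx.1, hx.2, by simp only; linarith, le_refl _⟩

/-- Tangential derivative vanishes on the left edge. -/
lemma fy_left (ha : 0 < a) (hU : IsOpen U) (hsub : Omg a ⊆ U) (hf : ContDiffOn ℝ 2 f U)
    (hb : ∀ p ∈ frontier (Omg a), f p = 0) {y : ℝ} (hy : y ∈ Set.Ioo (0:ℝ) 1) :
    fderiv ℝ f (0, y) (0, 1) = 0 := by
  have hmem : ((0, y) : ℝ × ℝ) ∈ Omg a := mem_omg_left ha ⟨hy.1.le, hy.2.le⟩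
  have hd : HasDerivAt (fun t => f (0, t)) (fderiv ℝ f (0, y) (0, 1)) y :=
    hasDerivAt_slice_snd (diffAt_of_c2 hU hf (hsub hmem))
  have hev : (fun t => f (0, t)) =ᶠ[nhds y] (fun _ => (0:ℝ)) := by
    filter_upwards [Ioo_mem_nhds hy.1 hy.2] with t ht
    exact edge_zero ha hb _ (mem_omg_left ha ⟨ht.1.le, ht.2.le⟩) (Or.inl rfl)
  have hd0 : HasDerivAt (fun _ : ℝ => (0:ℝ)) (fderiv ℝ f (0, y) (0, 1)) y :=
    hd.congr_of_eventuallyEq hev.symm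
  exact (hd0.unique (hasDerivAt_const y 0))

/-- Tangential derivative vanishes on the bottom edge. -/
lemma fx_bottom (ha : 0 < a) (hU : IsOpen U) (hsub : Omg a ⊆ U) (hf : ContDiffOn ℝ 2 f U)
    (hb : ∀ p ∈ frontier (Omg a), f p = 0) {x : ℝ} (hx : x ∈ Set.Ioo (0:ℝ) a) :
    fderiv ℝ f (x, 0) (1, 0) = 0 := by
  have hmem : ((x, 0) : ℝ × ℝ) ∈ Omg a := mem_omg_bottom ha ⟨hx.1.le, hx.2.le⟩
  have hd : HasDerivAt (fun t => f (t, 0)) (fderiv ℝ f (x, 0) (1, 0)) x :=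
    hasDerivAt_slice_fst (diffAt_of_c2 hU hf (hsub hmem))
  have hev : (fun t => f (t, 0)) =ᶠ[nhds x] (fun _ => (0:ℝ)) := by
    filter_upwards [Ioo_mem_nhds hx.1 hx.2] with t ht
    exact edge_zero ha hb _ (mem_omg_bottom ha ⟨ht.1.le, ht.2.le⟩) (Or.inr (Or.inl rfl))
  have hd0 : HasDerivAt (fun _ : ℝ => (0:ℝ)) (fderiv ℝ f (x, 0) (1, 0)) x :=
    hd.congr_of_eventuallyEq hev.symm
  exact (hd0.unique (hasDerivAt_const x 0))

/-- On the hypotenuse, `∂_y f = a ∂_x f`. -/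
lemma hyp_rel (ha : 0 < a) (hU : IsOpen U) (hsub : Omg a ⊆ U) (hf : ContDiffOn ℝ 2 f U)
    (hb : ∀ p ∈ frontier (Omg a), f p = 0) {x : ℝ} (hx : x ∈ Set.Ioo (0:ℝ) a) :
    fderiv ℝ f (x, 1 - x / a) (0, 1) = a * fderiv ℝ f (x, 1 - x / a) (1, 0) := by
  set p : ℝ × ℝ := (x, 1 - x / a) with hp
  have hmem : p ∈ Omg a := mem_omg_hyp ha ⟨hx.1.le, hx.2.le⟩
  have hdiff : DifferentiableAt ℝ f p := diffAt_of_c2 hU hf (hsub hmem)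
  have hcurve : HasDerivAt (fun t : ℝ => ((t, 1 - t / a) : ℝ × ℝ)) ((1:ℝ), -(1/a)) x := by
    refine (hasDerivAt_id x).prodMk ?_
    simpa using ((hasDerivAt_id x).div_const a).const_sub 1
  have hd : HasDerivAt (fun t => f (t, 1 - t / a)) (fderiv ℝ f p ((1:ℝ), -(1/a))) x :=
    hdiff.hasFDerivAt.comp_hasDerivAt x hcurve
  have hev : (fun t => f (t, 1 - t / a)) =ᶠ[nhds x] (fun _ => (0:ℝ)) := by
    filter_upwards [Ioo_mem_nhds hx.1 hx.2] with t ht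
    exact edge_zero ha hb _ (mem_omg_hyp ha ⟨ht.1.le, ht.2.le⟩) (Or.inr (Or.inr rfl))
  have hd0 : HasDerivAt (fun _ : ℝ => (0:ℝ)) (fderiv ℝ f p ((1:ℝ), -(1/a))) x :=
    hd.congr_of_eventuallyEq hev.symm
  have hzero : fderiv ℝ f p ((1:ℝ), -(1/a)) = 0 := hd0.unique (hasDerivAt_const x 0)
  have hlin : ((1:ℝ), -(1/a)) = ((1:ℝ), (0:ℝ)) - (1/a) • ((0:ℝ), (1:ℝ)) := by
    simp [Prod.ext_iff]
  rw [hlin, map_sub, ContinuousLinearMap.map_smul, smul_eq_mul] at hzero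
  have ha' : a ≠ 0 := ne_of_gt ha
  field_simp at hzero ⊢
  linarith [hzero]

end Edge


section Identities

variable {a : ℝ} {U : Set (ℝ × ℝ)} {f : ℝ × ℝ → ℝ}

lemma continuousOn_dfx (hU : IsOpen U) (hf : ContDiffOn ℝ 2 f U) (v : ℝ × ℝ) :
    ContinuousOn (fun p => fderiv ℝ (fun q => fderiv ℝ f q (1, 0)) p v) U :=
  (((contDiffOn_fx hU hf).fderiv_of_isOpen hU
    (by norm_num : (0:WithTop ℕ∞) + 1 ≤ 1)).clm_apply contDiffOn_const).continuousOn

lemma continuousOn_dfy (hU : IsOpen U) (hf : ContDiffOn ℝ 2 f U) (v : ℝ × ℝ) :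
    ContinuousOn (fun p => fderiv ℝ (fun q => fderiv ℝ f q (0, 1)) p v) U :=
  (((contDiffOn_fy hU hf).fderiv_of_isOpen hU
    (by norm_num : (0:WithTop ℕ∞) + 1 ≤ 1)).clm_apply contDiffOn_const).continuousOn

lemma hyp_snd_eq (ha : 0 < a) (y : ℝ) : 1 - (a * (1 - y)) / a = y := by
  field_simp
  ring

lemma f_zero_hyp' (ha : 0 < a) (hb : ∀ p ∈ frontier (Omg a), f p = 0)
    {y : ℝ} (hy : y ∈ Set.Icc (0:ℝ) 1) : f (a * (1 - y), y) = 0 := by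
  have hx : a * (1 - y) ∈ Set.Icc (0:ℝ) a := by
    constructor
    · nlinarith [hy.1, hy.2]
    · nlinarith [hy.1]
  have hmem := mem_omg_hyp ha hx
  rw [hyp_snd_eq ha] at hmem
  exact edge_zero ha hb _ hmem (Or.inr (Or.inr (by rw [hyp_snd_eq ha])))

lemma f_zero_hyp (ha : 0 < a) (hb : ∀ p ∈ frontier (Omg a), f p = 0)
    {x : ℝ} (hx : x ∈ Set.Icc (0:ℝ) a) : f (x, 1 - x / a) = 0 :=
  edge_zero ha hb _ (mem_omg_hyp ha hx) (Or.inr (Or.inr rfl))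

lemma f_zero_left (ha : 0 < a) (hb : ∀ p ∈ frontier (Omg a), f p = 0)
    {y : ℝ} (hy : y ∈ Set.Icc (0:ℝ) 1) : f (0, y) = 0 :=
  edge_zero ha hb _ (mem_omg_left ha hy) (Or.inl rfl)

lemma f_zero_bottom (ha : 0 < a) (hb : ∀ p ∈ frontier (Omg a), f p = 0)
    {x : ℝ} (hx : x ∈ Set.Icc (0:ℝ) a) : f (x, 0) = 0 :=
  edge_zero ha hb _ (mem_omg_bottom ha hx) (Or.inr (Or.inl rfl))

lemma energy_identity (ha : 0 < a) (hU : IsOpen U) (hsub : Omg a ⊆ U)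
    (hf : ContDiffOn ℝ 2 f U) (hb : ∀ p ∈ frontier (Omg a), f p = 0) {s : ℝ}
    (hPDE : ∀ p ∈ Omg a, -s * (fderiv ℝ (fun q => fderiv ℝ f q (1, 0)) p (1, 0)
      + fderiv ℝ (fun q => fderiv ℝ f q (0, 1)) p (0, 1)) = f p) :
    ∫ p in Omg a,
      (s * (fderiv ℝ f p (1, 0))^2 + s * (fderiv ℝ f p (0, 1))^2 - (f p)^2) = 0 := by
  set DF : ℝ × ℝ → ℝ := fun p => s * (fderiv ℝ f p (1, 0) * fderiv ℝ f p (1, 0)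
    + f p * fderiv ℝ (fun q => fderiv ℝ f q (1, 0)) p (1, 0)) with hDF
  set DG : ℝ × ℝ → ℝ := fun p => s * (fderiv ℝ f p (0, 1) * fderiv ℝ f p (0, 1)
    + f p * fderiv ℝ (fun q => fderiv ℝ f q (0, 1)) p (0, 1)) with hDG
  have hDFc : ContinuousOn DF (Omg a) := by
    refine ContinuousOn.mono ?_ hsub
    exact continuousOn_const.mul
      (((contDiffOn_fx hU hf).continuousOn.mul (contDiffOn_fx hU hf).continuousOn).add
        (hf.continuousOn.mul (continuousOn_dfx hU hf _)))
  have hDGc : ContinuousOn DG (Omg a) := by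
    refine ContinuousOn.mono ?_ hsub
    exact continuousOn_const.mul
      (((contDiffOn_fy hU hf).continuousOn.mul (contDiffOn_fy hU hf).continuousOn).add
        (hf.continuousOn.mul (continuousOn_dfy hU hf _)))
  have hIx : ∫ p in Omg a, DF p = 0 := by
    rw [slice_x ha (fun p => s * (f p * fderiv ℝ f p (1, 0))) DF (fun p hp => by
      have hpU := hsub hp
      have h1 : HasDerivAt (fun t => f (t, p.2)) (fderiv ℝ f p (1, 0)) p.1 :=
        hasDerivAt_slice_fst (diffAt_of_c2 hU hf hpU)
      have h2 : HasDerivAt (fun t => fderiv ℝ f (t, p.2) (1, 0))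
          (fderiv ℝ (fun q => fderiv ℝ f q (1, 0)) p (1, 0)) p.1 :=
        hasDerivAt_slice_fst (diffAt_fx hU hf hpU)
      exact (h1.mul h2).const_mul s) hDFc]
    have hzero : Set.EqOn (fun y => s * (f (a*(1-y), y) * fderiv ℝ f (a*(1-y), y) (1, 0))
        - s * (f (0, y) * fderiv ℝ f (0, y) (1, 0))) (fun _ => (0:ℝ))
        (Set.uIcc (0:ℝ) 1) := by
      intro y hy
      rw [Set.uIcc_of_le zero_le_one] at hy
      simp only [f_zero_hyp' ha hb hy, f_zero_left ha hb hy, zero_mul, mul_zero, sub_zero]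
    rw [intervalIntegral.integral_congr hzero, intervalIntegral.integral_zero]
  have hIy : ∫ p in Omg a, DG p = 0 := by
    rw [slice_y ha (fun p => s * (f p * fderiv ℝ f p (0, 1))) DG (fun p hp => by
      have hpU := hsub hp
      have h1 : HasDerivAt (fun t => f (p.1, t)) (fderiv ℝ f p (0, 1)) p.2 :=
        hasDerivAt_slice_snd (diffAt_of_c2 hU hf hpU)
      have h2 : HasDerivAt (fun t => fderiv ℝ f (p.1, t) (0, 1))
          (fderiv ℝ (fun q => fderiv ℝ f q (0, 1)) p (0, 1)) p.2 :=
        hasDerivAt_slice_snd (diffAt_fy hU hf hpU)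
      exact (h1.mul h2).const_mul s) hDGc]
    have hzero : Set.EqOn (fun x => s * (f (x, 1 - x/a) * fderiv ℝ f (x, 1 - x/a) (0, 1))
        - s * (f (x, 0) * fderiv ℝ f (x, 0) (0, 1))) (fun _ => (0:ℝ))
        (Set.uIcc (0:ℝ) a) := by
      intro x hx
      rw [Set.uIcc_of_le ha.le] at hx
      simp only [f_zero_hyp ha hb hx, f_zero_bottom ha hb hx, zero_mul, mul_zero, sub_zero]
    rw [intervalIntegral.integral_congr hzero, intervalIntegral.integral_zero]
  have hadd : ∫ p in Omg a, (DF p + DG p) = 0 := by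
    rw [MeasureTheory.integral_add (hDFc.integrableOn_compact (isCompact_omg ha))
      (hDGc.integrableOn_compact (isCompact_omg ha)), hIx, hIy, add_zero]
  refine Eq.trans ?_ hadd
  refine MeasureTheory.setIntegral_congr_fun measurableSet_omg (fun p hp => ?_)
  have hpde := hPDE p hp
  simp only [hDF, hDG]
  linear_combination (f p) * hpde

end Identities


noncomputable def V1 (a s : ℝ) (f : ℝ × ℝ → ℝ) (p : ℝ × ℝ) : ℝ :=
  s * (((p.1 - p.1^2/a) * fderiv ℝ f p (1, 0) - (p.2 - p.2^2) * fderiv ℝ f p (0, 1))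
      * fderiv ℝ f p (1, 0))
  - (p.1 - p.1^2/a)/2 * (s * ((fderiv ℝ f p (1, 0))^2 + (fderiv ℝ f p (0, 1))^2) - (f p)^2)
  + s * ((1 - p.1/a - p.2) * f p * fderiv ℝ f p (1, 0)) + s * (f p)^2/(2*a)

noncomputable def V2 (a s : ℝ) (f : ℝ × ℝ → ℝ) (p : ℝ × ℝ) : ℝ :=
  s * (((p.1 - p.1^2/a) * fderiv ℝ f p (1, 0) - (p.2 - p.2^2) * fderiv ℝ f p (0, 1))
      * fderiv ℝ f p (0, 1))
  + (p.2 - p.2^2)/2 * (s * ((fderiv ℝ f p (1, 0))^2 + (fderiv ℝ f p (0, 1))^2) - (f p)^2)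
  + s * ((1 - p.1/a - p.2) * f p * fderiv ℝ f p (0, 1)) + s * (f p)^2/2

noncomputable def DV1 (a s : ℝ) (f : ℝ × ℝ → ℝ) (p : ℝ × ℝ) : ℝ :=
  s * (((1 - 2*p.1/a) * fderiv ℝ f p (1, 0)
        + (p.1 - p.1^2/a) * fderiv ℝ (fun q => fderiv ℝ f q (1, 0)) p (1, 0)
        - (p.2 - p.2^2) * fderiv ℝ (fun q => fderiv ℝ f q (0, 1)) p (1, 0))
      * fderiv ℝ f p (1, 0)
      + ((p.1 - p.1^2/a) * fderiv ℝ f p (1, 0) - (p.2 - p.2^2) * fderiv ℝ f p (0, 1))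
        * fderiv ℝ (fun q => fderiv ℝ f q (1, 0)) p (1, 0))
  - ((1 - 2*p.1/a)/2 * (s * ((fderiv ℝ f p (1, 0))^2 + (fderiv ℝ f p (0, 1))^2) - (f p)^2)
      + (p.1 - p.1^2/a)/2
        * (s * (2 * fderiv ℝ f p (1, 0) * fderiv ℝ (fun q => fderiv ℝ f q (1, 0)) p (1, 0)
            + 2 * fderiv ℝ f p (0, 1) * fderiv ℝ (fun q => fderiv ℝ f q (0, 1)) p (1, 0))
          - 2 * f p * fderiv ℝ f p (1, 0)))
  + s * ((-(1/a) * f p + (1 - p.1/a - p.2) * fderiv ℝ f p (1, 0)) * fderiv ℝ f p (1, 0)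
      + ((1 - p.1/a - p.2) * f p) * fderiv ℝ (fun q => fderiv ℝ f q (1, 0)) p (1, 0))
  + s * (2 * f p * fderiv ℝ f p (1, 0))/(2*a)

noncomputable def DV2 (a s : ℝ) (f : ℝ × ℝ → ℝ) (p : ℝ × ℝ) : ℝ :=
  s * (((p.1 - p.1^2/a) * fderiv ℝ (fun q => fderiv ℝ f q (0, 1)) p (1, 0)
        - ((1 - 2*p.2) * fderiv ℝ f p (0, 1)
            + (p.2 - p.2^2) * fderiv ℝ (fun q => fderiv ℝ f q (0, 1)) p (0, 1)))
      * fderiv ℝ f p (0, 1)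
      + ((p.1 - p.1^2/a) * fderiv ℝ f p (1, 0) - (p.2 - p.2^2) * fderiv ℝ f p (0, 1))
        * fderiv ℝ (fun q => fderiv ℝ f q (0, 1)) p (0, 1))
  + ((1 - 2*p.2)/2 * (s * ((fderiv ℝ f p (1, 0))^2 + (fderiv ℝ f p (0, 1))^2) - (f p)^2)
      + (p.2 - p.2^2)/2
        * (s * (2 * fderiv ℝ f p (1, 0) * fderiv ℝ (fun q => fderiv ℝ f q (0, 1)) p (1, 0)
            + 2 * fderiv ℝ f p (0, 1) * fderiv ℝ (fun q => fderiv ℝ f q (0, 1)) p (0, 1))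
          - 2 * f p * fderiv ℝ f p (0, 1)))
  + s * ((-(f p) + (1 - p.1/a - p.2) * fderiv ℝ f p (0, 1)) * fderiv ℝ f p (0, 1)
      + ((1 - p.1/a - p.2) * f p) * fderiv ℝ (fun q => fderiv ℝ f q (0, 1)) p (0, 1))
  + s * (2 * f p * fderiv ℝ f p (0, 1))/2

section Diamond

variable {a : ℝ} {U : Set (ℝ × ℝ)} {f : ℝ × ℝ → ℝ}

lemma hasDerivAt_V1 (hU : IsOpen U) (hf : ContDiffOn ℝ 2 f U) {s : ℝ} {p : ℝ × ℝ}
    (hpU : p ∈ U) : HasDerivAt (fun t => V1 a s f (t, p.2)) (DV1 a s f p) p.1 := by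
  have hW : HasDerivAt (fun t => f (t, p.2)) (fderiv ℝ f p (1, 0)) p.1 :=
    hasDerivAt_slice_fst (diffAt_of_c2 hU hf hpU)
  have hX : HasDerivAt (fun t => fderiv ℝ f (t, p.2) (1, 0))
      (fderiv ℝ (fun q => fderiv ℝ f q (1, 0)) p (1, 0)) p.1 :=
    hasDerivAt_slice_fst (diffAt_fx hU hf hpU)
  have hY : HasDerivAt (fun t => fderiv ℝ f (t, p.2) (0, 1))
      (fderiv ℝ (fun q => fderiv ℝ f q (0, 1)) p (1, 0)) p.1 :=
    hasDerivAt_slice_fst (diffAt_fy hU hf hpU)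
  have hCH : HasDerivAt (fun t : ℝ => t - t^2/a) (1 - 2*p.1/a) p.1 := by
    have h := (hasDerivAt_id p.1).sub ((hasDerivAt_pow 2 p.1).div_const a)
    refine h.congr_deriv ?_
    push_cast; ring
  have hPS : HasDerivAt (fun t : ℝ => 1 - t/a - p.2) (-(1/a) : ℝ) p.1 :=
    (((hasDerivAt_id p.1).div_const a).const_sub 1).sub_const p.2
  have T1 := (((hCH.mul hX).sub (hY.const_mul (p.2 - p.2^2))).mul hX).const_mul s
  have T2 := (hCH.div_const 2).mul ((((hX.pow 2).add (hY.pow 2)).const_mul s).sub (hW.pow 2))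
  have T3 := ((hPS.mul hW).mul hX).const_mul s
  have T4 := ((hW.pow 2).const_mul s).div_const (2*a)
  have H := ((T1.sub T2).add T3).add T4
  refine H.congr_deriv ?_
  simp only [DV1]
  push_cast; simp only [Pi.mul_apply, Pi.sub_apply, Pi.add_apply, Pi.pow_apply, Prod.mk.eta]; ring

lemma hasDerivAt_V2 (hU : IsOpen U) (hf : ContDiffOn ℝ 2 f U) {s : ℝ} {p : ℝ × ℝ}
    (hpU : p ∈ U) : HasDerivAt (fun t => V2 a s f (p.1, t)) (DV2 a s f p) p.2 := by
  have hW : HasDerivAt (fun t => f (p.1, t)) (fderiv ℝ f p (0, 1)) p.2 :=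
    hasDerivAt_slice_snd (diffAt_of_c2 hU hf hpU)
  have hX : HasDerivAt (fun t => fderiv ℝ f (p.1, t) (1, 0))
      (fderiv ℝ (fun q => fderiv ℝ f q (1, 0)) p (0, 1)) p.2 :=
    hasDerivAt_slice_snd (diffAt_fx hU hf hpU)
  have hY : HasDerivAt (fun t => fderiv ℝ f (p.1, t) (0, 1))
      (fderiv ℝ (fun q => fderiv ℝ f q (0, 1)) p (0, 1)) p.2 :=
    hasDerivAt_slice_snd (diffAt_fy hU hf hpU)
  have hET : HasDerivAt (fun t : ℝ => t - t^2) (1 - 2*p.2) p.2 := by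
    have h := (hasDerivAt_id p.2).sub (hasDerivAt_pow 2 p.2)
    refine h.congr_deriv ?_
    push_cast; ring
  have hPS : HasDerivAt (fun t : ℝ => 1 - p.1/a - t) (-1 : ℝ) p.2 := by
    have h := (hasDerivAt_id p.2).const_sub (1 - p.1/a)
    exact h
  have T1 := (((hX.const_mul (p.1 - p.1^2/a)).sub (hET.mul hY)).mul hY).const_mul s
  have T2 := (hET.div_const 2).mul ((((hX.pow 2).add (hY.pow 2)).const_mul s).sub (hW.pow 2))
  have T3 := ((hPS.mul hW).mul hY).const_mul s
  have T4 := ((hW.pow 2).const_mul s).div_const 2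
  have H := ((T1.add T2).add T3).add T4
  refine H.congr_deriv ?_
  simp only [DV2]
  rw [← mixed_symm hU hf hpU]
  push_cast; simp only [Pi.mul_apply, Pi.sub_apply, Pi.add_apply, Pi.pow_apply, Prod.mk.eta]; ring

lemma continuousOn_DV1 (hU : IsOpen U) (hf : ContDiffOn ℝ 2 f U) (s : ℝ) :
    ContinuousOn (DV1 a s f) U := by
  have c0 : ContinuousOn f U := hf.continuousOn
  have c1 : ContinuousOn (fun p => fderiv ℝ f p (1, 0)) U := (contDiffOn_fx hU hf).continuousOn
  have c2 : ContinuousOn (fun p => fderiv ℝ f p (0, 1)) U := (contDiffOn_fy hU hf).continuousOn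
  have c3 : ContinuousOn (fun p => fderiv ℝ (fun q => fderiv ℝ f q (1, 0)) p (1, 0)) U :=
    continuousOn_dfx hU hf _
  have c4 : ContinuousOn (fun p => fderiv ℝ (fun q => fderiv ℝ f q (0, 1)) p (1, 0)) U :=
    continuousOn_dfy hU hf _
  unfold DV1
  fun_prop

lemma continuousOn_DV2 (hU : IsOpen U) (hf : ContDiffOn ℝ 2 f U) (s : ℝ) :
    ContinuousOn (DV2 a s f) U := by
  have c0 : ContinuousOn f U := hf.continuousOn
  have c1 : ContinuousOn (fun p => fderiv ℝ f p (1, 0)) U := (contDiffOn_fx hU hf).continuousOn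
  have c2 : ContinuousOn (fun p => fderiv ℝ f p (0, 1)) U := (contDiffOn_fy hU hf).continuousOn
  have c4 : ContinuousOn (fun p => fderiv ℝ (fun q => fderiv ℝ f q (0, 1)) p (1, 0)) U :=
    continuousOn_dfy hU hf _
  have c5 : ContinuousOn (fun p => fderiv ℝ (fun q => fderiv ℝ f q (0, 1)) p (0, 1)) U :=
    continuousOn_dfy hU hf _
  unfold DV2
  fun_prop

end Diamond


section DiamondMain

variable {a : ℝ} {U : Set (ℝ × ℝ)} {f : ℝ × ℝ → ℝ}

lemma V1_left (ha : 0 < a) (hU : IsOpen U) (hsub : Omg a ⊆ U) (hf : ContDiffOn ℝ 2 f U)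
    (hb : ∀ p ∈ frontier (Omg a), f p = 0) (s : ℝ) {y : ℝ} (hy : y ∈ Set.Icc (0:ℝ) 1) :
    V1 a s f (0, y) = 0 := by
  have hf0 : f (0, y) = 0 := f_zero_left ha hb hy
  have h2 : (y - y^2) * fderiv ℝ f (0, y) (0, 1) = 0 := by
    rcases eq_or_lt_of_le hy.1 with h | h
    · rw [← h]; ring
    · rcases eq_or_lt_of_le hy.2 with h' | h'
      · rw [h']; ring
      · rw [fy_left ha hU hsub hf hb ⟨h, h'⟩, mul_zero]
  simp only [V1]
  rw [hf0]
  linear_combination (-(s * fderiv ℝ f (0, y) (1, 0))) * h2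

lemma V1_hyp (ha : 0 < a) (hU : IsOpen U) (hsub : Omg a ⊆ U) (hf : ContDiffOn ℝ 2 f U)
    (hb : ∀ p ∈ frontier (Omg a), f p = 0) (s : ℝ) {y : ℝ} (hy : y ∈ Set.Icc (0:ℝ) 1) :
    V1 a s f (a*(1-y), y)
      = -(a*(1+a^2)*s/2) * ((y - y^2) * (fderiv ℝ f (a*(1-y), y) (1, 0))^2) := by
  have hf0 : f (a*(1-y), y) = 0 := f_zero_hyp' ha hb hy
  rcases eq_or_lt_of_le hy.1 with h0 | h0
  · simp only [V1]
    rw [hf0, ← h0]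
    field_simp <;> ring
  · rcases eq_or_lt_of_le hy.2 with h1 | h1
    · simp only [V1]
      rw [hf0, h1]
      field_simp <;> ring
    · have hxm : a*(1-y) ∈ Set.Ioo (0:ℝ) a := by
        constructor
        · nlinarith
        · nlinarith
      have hrel := hyp_rel ha hU hsub hf hb hxm
      rw [hyp_snd_eq ha] at hrel
      simp only [V1]
      rw [hf0, hrel]
      field_simp <;> ring

lemma V2_bottom (ha : 0 < a) (hU : IsOpen U) (hsub : Omg a ⊆ U) (hf : ContDiffOn ℝ 2 f U)
    (hb : ∀ p ∈ frontier (Omg a), f p = 0) (s : ℝ) {x : ℝ} (hx : x ∈ Set.Icc (0:ℝ) a) :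
    V2 a s f (x, 0) = 0 := by
  have hf0 : f (x, 0) = 0 := f_zero_bottom ha hb hx
  have h2 : (x - x^2/a) * fderiv ℝ f (x, 0) (1, 0) = 0 := by
    rcases eq_or_lt_of_le hx.1 with h | h
    · rw [← h]; ring
    · rcases eq_or_lt_of_le hx.2 with h' | h'
      · rw [h']
        have : a - a^2/a = 0 := by field_simp <;> ring
        rw [this, zero_mul]
      · rw [fx_bottom ha hU hsub hf hb ⟨h, h'⟩, mul_zero]
  simp only [V2]
  rw [hf0]
  linear_combination (s * fderiv ℝ f (x, 0) (0, 1)) * h2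

lemma V2_hyp (ha : 0 < a) (hU : IsOpen U) (hsub : Omg a ⊆ U) (hf : ContDiffOn ℝ 2 f U)
    (hb : ∀ p ∈ frontier (Omg a), f p = 0) (s : ℝ) {x : ℝ} (hx : x ∈ Set.Icc (0:ℝ) a) :
    V2 a s f (x, 1 - x/a)
      = ((1+a^2)*s/2) * (((1 - x/a) - (1 - x/a)^2) * (fderiv ℝ f (x, 1 - x/a) (1, 0))^2) := by
  have hf0 : f (x, 1 - x/a) = 0 := f_zero_hyp ha hb hx
  rcases eq_or_lt_of_le hx.1 with h0 | h0
  · simp only [V2]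
    rw [hf0, ← h0]
    field_simp <;> ring
  · rcases eq_or_lt_of_le hx.2 with h1 | h1
    · simp only [V2]
      rw [hf0, h1]
      field_simp <;> ring
    · have hrel := hyp_rel ha hU hsub hf hb ⟨h0, h1⟩
      simp only [V2]
      rw [hf0, hrel]
      field_simp <;> ring

lemma diamond_identity (ha : 0 < a) (hU : IsOpen U) (hsub : Omg a ⊆ U)
    (hf : ContDiffOn ℝ 2 f U) (hb : ∀ p ∈ frontier (Omg a), f p = 0) {s : ℝ}
    (hPDE : ∀ p ∈ Omg a, -s * (fderiv ℝ (fun q => fderiv ℝ f q (1, 0)) p (1, 0)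
      + fderiv ℝ (fun q => fderiv ℝ f q (0, 1)) p (0, 1)) = f p) :
    ∫ p in Omg a, (s * (2 - 2*p.1/a - 2*p.2) * (fderiv ℝ f p (1, 0))^2
      - (1 - 2*p.2) * (f p)^2) = 0 := by
  have hIx : ∫ p in Omg a, DV1 a s f p
      = ∫ y in (0:ℝ)..1, (V1 a s f (a*(1-y), y) - V1 a s f (0, y)) :=
    slice_x ha (V1 a s f) (DV1 a s f) (fun p hp => hasDerivAt_V1 hU hf (hsub hp))
      ((continuousOn_DV1 hU hf s).mono hsub)
  have hIy : ∫ p in Omg a, DV2 a s f p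
      = ∫ x in (0:ℝ)..a, (V2 a s f (x, 1 - x/a) - V2 a s f (x, 0)) :=
    slice_y ha (V2 a s f) (DV2 a s f) (fun p hp => hasDerivAt_V2 hU hf (hsub hp))
      ((continuousOn_DV2 hU hf s).mono hsub)
  have hBx : ∫ y in (0:ℝ)..1, (V1 a s f (a*(1-y), y) - V1 a s f (0, y))
      = -(a*(1+a^2)*s/2)
        * ∫ y in (0:ℝ)..1, ((y - y^2) * (fderiv ℝ f (a*(1-y), y) (1, 0))^2) := by
    rw [← intervalIntegral.integral_const_mul]
    refine intervalIntegral.integral_congr (fun y hy => ?_)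
    rw [Set.uIcc_of_le zero_le_one] at hy
    rw [V1_hyp ha hU hsub hf hb s hy, V1_left ha hU hsub hf hb s hy, sub_zero]
  have hBy : ∫ x in (0:ℝ)..a, (V2 a s f (x, 1 - x/a) - V2 a s f (x, 0))
      = ((1+a^2)*s/2)
        * ∫ x in (0:ℝ)..a, (((1 - x/a) - (1 - x/a)^2) * (fderiv ℝ f (x, 1 - x/a) (1, 0))^2) := by
    rw [← intervalIntegral.integral_const_mul]
    refine intervalIntegral.integral_congr (fun x hx => ?_)
    rw [Set.uIcc_of_le ha.le] at hx
    rw [V2_hyp ha hU hsub hf hb s hx, V2_bottom ha hU hsub hf hb s hx, sub_zero]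
  have hCV : ∫ y in (0:ℝ)..1, ((y - y^2) * (fderiv ℝ f (a*(1-y), y) (1, 0))^2)
      = a⁻¹ * ∫ x in (0:ℝ)..a,
          (((1 - x/a) - (1 - x/a)^2) * (fderiv ℝ f (x, 1 - x/a) (1, 0))^2) := by
    set g : ℝ → ℝ :=
      fun x => ((1 - x/a) - (1 - x/a)^2) * (fderiv ℝ f (x, 1 - x/a) (1, 0))^2 with hg
    have e1 : ∫ y in (0:ℝ)..1, ((y - y^2) * (fderiv ℝ f (a*(1-y), y) (1, 0))^2)
        = ∫ y in (0:ℝ)..1, (fun t => g (a - t)) (a * y) := by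
      refine intervalIntegral.integral_congr (fun y _ => ?_)
      have e2 : a - a * y = a*(1-y) := by ring
      simp only [hg, e2, hyp_snd_eq ha]
    rw [e1, intervalIntegral.integral_comp_mul_left (fun t => g (a - t)) ha.ne']
    rw [mul_zero, mul_one, intervalIntegral.integral_comp_sub_left g a]
    rw [sub_self, sub_zero, smul_eq_mul]
  have hInt1 : IntegrableOn (DV1 a s f) (Omg a) :=
    (((continuousOn_DV1 hU hf s).mono hsub)).integrableOn_compact (isCompact_omg ha)
  have hInt2 : IntegrableOn (DV2 a s f) (Omg a) :=
    (((continuousOn_DV2 hU hf s).mono hsub)).integrableOn_compact (isCompact_omg ha)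
  have hsum : ∫ p in Omg a, (DV1 a s f p + DV2 a s f p) = 0 := by
    rw [MeasureTheory.integral_add hInt1 hInt2, hIx, hIy, hBx, hBy, hCV]
    field_simp <;> ring
  refine Eq.trans ?_ hsum
  refine MeasureTheory.setIntegral_congr_fun measurableSet_omg (fun p hp => ?_)
  have hpde := hPDE p hp
  simp only [DV1, DV2]
  linear_combination ((p.1 - p.1^2/a) * fderiv ℝ f p (1, 0)
    - (p.2 - p.2^2) * fderiv ℝ f p (0, 1) + (1 - p.1/a - p.2) * f p) * hpde

end DiamondMain


section Limits

lemma step_sum (c : ℝ) (h0 : 0 ≤ c) :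
    ∀ N : ℕ, min c ((N:ℝ)/16) ≤ ∑ k ∈ Finset.range N,
      ((1:ℝ)/16) * (if (k:ℝ)/16 < c then 1 else 0) := by
  intro N
  induction N with
  | zero => simpa using min_le_right c 0
  | succ n ih =>
    rw [Finset.sum_range_succ]
    by_cases h : (n:ℝ)/16 < c
    · rw [if_pos h]
      have hstep : min c (((n:ℕ) + 1 : ℝ)/16) ≤ min c ((n:ℝ)/16) + 1/16 := by
        rcases le_total c ((n:ℝ)/16) with h' | h'
        · rw [min_eq_left h']
          have := min_le_left c (((n:ℕ) + 1 : ℝ)/16)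
          linarith
        · rw [min_eq_right h']
          have := min_le_right c (((n:ℕ) + 1 : ℝ)/16)
          linarith
      push_cast at hstep ⊢
      linarith
    · rw [if_neg h]
      push_neg at h
      have h1 : min c (((n:ℕ) + 1 : ℝ)/16) ≤ c := min_le_left _ _
      have h2 : min c ((n:ℝ)/16) = c := min_eq_left (by linarith)
      push_cast at h1 ⊢
      linarith [ih, h2.ge, h2.le]

lemma sum_ind {c : ℝ} (h0 : 0 ≤ c) (h1 : c ≤ 1) :
    c ≤ ∑ k ∈ Finset.range 16, ((1:ℝ)/16) * (if (k:ℝ)/16 < c then 1 else 0) := by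
  have := step_sum c h0 16
  rw [show ((16:ℕ):ℝ)/16 = 1 by norm_num, min_eq_left h1] at this
  exact this

lemma ratio_slab {a : ℝ} (ha : 0 < a) {t : ℝ} (ht : t ∈ Set.Ico (0:ℝ) 1) :
    (volume (Omg a ∩ (Set.Ioo (-1) (a+1) ×ˢ Set.Ioo t 2))).toReal / (volume (Omg a)).toReal
      = (1 - t)^2 := by
  rw [omg_slab_eq ha ht.1, volume_omg_slab ha ht, volume_omg ha,
    ENNReal.toReal_ofReal (by positivity), ENNReal.toReal_ofReal (by positivity)]
  field_simp

end Limits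


section PerJ

variable {a : ℝ} {U : Set (ℝ × ℝ)} {f : ℝ × ℝ → ℝ}

lemma per_j (ha : 0 < a) (hU : IsOpen U) (hsub : Omg a ⊆ U) (hf : ContDiffOn ℝ 2 f U)
    (hb : ∀ p ∈ frontier (Omg a), f p = 0) {c : ℝ} (hc : 0 < c)
    (hPDE : ∀ p ∈ Omg a, -c^2 * (fderiv ℝ (fun q => fderiv ℝ f q (1, 0)) p (1, 0)
      + fderiv ℝ (fun q => fderiv ℝ f q (0, 1)) p (0, 1)) = f p)
    (hn : ∫ p in Omg a, (f p)^2 = 1) :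
    (∫ p in Omg a, (c * fderiv ℝ f p (1, 0))^2) ≤ 1 ∧
    1/2 - (∑ k ∈ Finset.range 16, ((1:ℝ)/16) *
        ∫ p in Omg a ∩ (Set.Ioo (-1) (a+1) ×ˢ Set.Ioo ((k:ℝ)/16) 2), (f p)^2)
      ≤ ∫ p in Omg a, (c * fderiv ℝ f p (1, 0))^2 := by
  have hcomp := isCompact_omg (a := a) ha
  have cf : ContinuousOn f (Omg a) := hf.continuousOn.mono hsub
  have cX : ContinuousOn (fun p => fderiv ℝ f p (1, 0)) (Omg a) :=
    (contDiffOn_fx hU hf).continuousOn.mono hsub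
  have cY : ContinuousOn (fun p => fderiv ℝ f p (0, 1)) (Omg a) :=
    (contDiffOn_fy hU hf).continuousOn.mono hsub
  have I1 : IntegrableOn (fun p => (c * fderiv ℝ f p (1, 0))^2) (Omg a) :=
    (by fun_prop : ContinuousOn (fun p => (c * fderiv ℝ f p (1, 0))^2) (Omg a)).integrableOn_compact hcomp
  have I2 : IntegrableOn (fun p => c^2 * (2 - 2*p.1/a - 2*p.2) * (fderiv ℝ f p (1, 0))^2)
      (Omg a) :=
    (by fun_prop : ContinuousOn _ (Omg a)).integrableOn_compact hcomp
  have I3 : IntegrableOn (fun p => (1 - 2*p.2) * (f p)^2) (Omg a) :=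
    (by fun_prop : ContinuousOn _ (Omg a)).integrableOn_compact hcomp
  have I4 : IntegrableOn (fun p => c^2 * (fderiv ℝ f p (1, 0))^2
      + c^2 * (fderiv ℝ f p (0, 1))^2) (Omg a) :=
    (by fun_prop : ContinuousOn _ (Omg a)).integrableOn_compact hcomp
  have I4x : IntegrableOn (fun p => c^2 * (fderiv ℝ f p (1, 0))^2) (Omg a) :=
    (by fun_prop : ContinuousOn _ (Omg a)).integrableOn_compact hcomp
  have I4y : IntegrableOn (fun p => c^2 * (fderiv ℝ f p (0, 1))^2) (Omg a) :=
    (by fun_prop : ContinuousOn _ (Omg a)).integrableOn_compact hcomp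
  have I5 : IntegrableOn (fun p => (f p)^2) (Omg a) :=
    (by fun_prop : ContinuousOn _ (Omg a)).integrableOn_compact hcomp
  have I6 : IntegrableOn (fun p => p.2 * (f p)^2) (Omg a) :=
    (by fun_prop : ContinuousOn _ (Omg a)).integrableOn_compact hcomp
  -- the x-energy written with c² inside
  have hfx2 : ∫ p in Omg a, (c * fderiv ℝ f p (1, 0))^2
      = ∫ p in Omg a, c^2 * (fderiv ℝ f p (1, 0))^2 := by
    refine MeasureTheory.setIntegral_congr_fun measurableSet_omg (fun p _ => ?_)
    ring
  -- (E) : f j ≤ 1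
  have hen := energy_identity ha hU hsub hf hb (s := c^2) hPDE
  have hen' : ∫ p in Omg a, (c^2 * (fderiv ℝ f p (1, 0))^2
      + c^2 * (fderiv ℝ f p (0, 1))^2) = 1 := by
    have hsub' : ∫ p in Omg a, ((c^2 * (fderiv ℝ f p (1, 0))^2
        + c^2 * (fderiv ℝ f p (0, 1))^2) - (f p)^2) = 0 := by
      refine Eq.trans ?_ hen
      exact MeasureTheory.setIntegral_congr_fun measurableSet_omg (fun p _ => by ring)
    rw [MeasureTheory.integral_sub I4 I5, hn] at hsub'
    linarith
  have hsplit : ∫ p in Omg a, (c^2 * (fderiv ℝ f p (1, 0))^2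
        + c^2 * (fderiv ℝ f p (0, 1))^2)
      = (∫ p in Omg a, c^2 * (fderiv ℝ f p (1, 0))^2)
        + ∫ p in Omg a, c^2 * (fderiv ℝ f p (0, 1))^2 :=
    MeasureTheory.integral_add I4x I4y
  have hynn : 0 ≤ ∫ p in Omg a, c^2 * (fderiv ℝ f p (0, 1))^2 :=
    MeasureTheory.setIntegral_nonneg measurableSet_omg (fun p _ => by positivity)
  have hle1 : ∫ p in Omg a, (c * fderiv ℝ f p (1, 0))^2 ≤ 1 := by
    rw [hfx2]
    nlinarith [hen', hsplit, hynn]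
  refine ⟨hle1, ?_⟩
  -- (♦) consequences
  have hdi := diamond_identity ha hU hsub hf hb (s := c^2) hPDE
  have hM : ∫ p in Omg a, (1 - 2*p.2) * (f p)^2
      = ∫ p in Omg a, c^2 * (2 - 2*p.1/a - 2*p.2) * (fderiv ℝ f p (1, 0))^2 := by
    have hsub' : ∫ p in Omg a, (c^2 * (2 - 2*p.1/a - 2*p.2) * (fderiv ℝ f p (1, 0))^2
        - (1 - 2*p.2) * (f p)^2) = 0 := hdi
    rw [MeasureTheory.integral_sub I2 I3] at hsub'
    linarith
  have hMle : ∫ p in Omg a, (1 - 2*p.2) * (f p)^2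
      ≤ 2 * ∫ p in Omg a, (c * fderiv ℝ f p (1, 0))^2 := by
    rw [hfx2, hM, ← MeasureTheory.integral_const_mul]
    refine MeasureTheory.setIntegral_mono_on I2 (by
      have := I4x.const_mul (2:ℝ)
      exact (by fun_prop : ContinuousOn _ (Omg a)).integrableOn_compact hcomp)
      measurableSet_omg (fun p hp => ?_)
    obtain ⟨hx0, _, hy0, _⟩ := hp
    have hda : 0 ≤ p.1 / a := div_nonneg hx0 ha.le
    have h1 : 0 ≤ c^2 * (p.1/a) * (fderiv ℝ f p (1, 0))^2 := by positivity
    have h2 : 0 ≤ c^2 * p.2 * (fderiv ℝ f p (1, 0))^2 :=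
      mul_nonneg (mul_nonneg (sq_nonneg c) hy0) (sq_nonneg _)
    have he : c^2 * (2 - 2*p.1/a - 2*p.2) * (fderiv ℝ f p (1, 0))^2
        = 2 * (c^2 * (fderiv ℝ f p (1, 0))^2) - 2 * (c^2 * (p.1/a) * (fderiv ℝ f p (1, 0))^2)
          - 2 * (c^2 * p.2 * (fderiv ℝ f p (1, 0))^2) := by ring
    linarith
  -- M = 1 - 2 q
  have hMq : ∫ p in Omg a, (1 - 2*p.2) * (f p)^2
      = 1 - 2 * ∫ p in Omg a, p.2 * (f p)^2 := by
    have : ∫ p in Omg a, (1 - 2*p.2) * (f p)^2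
        = ∫ p in Omg a, ((f p)^2 - 2 * (p.2 * (f p)^2)) :=
      MeasureTheory.setIntegral_congr_fun measurableSet_omg (fun p _ => by ring)
    rw [this, MeasureTheory.integral_sub I5 (I6.const_mul 2), hn,
      MeasureTheory.integral_const_mul]
  -- q ≤ g
  have hq : ∫ p in Omg a, p.2 * (f p)^2
      ≤ ∑ k ∈ Finset.range 16, ((1:ℝ)/16) *
        ∫ p in Omg a ∩ (Set.Ioo (-1) (a+1) ×ˢ Set.Ioo ((k:ℝ)/16) 2), (f p)^2 := by
    have hTk : ∀ k : ℕ, MeasurableSet {p : ℝ × ℝ | (k:ℝ)/16 < p.2} :=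
      fun k => measurableSet_lt measurable_const measurable_snd
    have hrw : ∀ k ∈ Finset.range 16,
        ((1:ℝ)/16) * ∫ p in Omg a ∩ (Set.Ioo (-1) (a+1) ×ˢ Set.Ioo ((k:ℝ)/16) 2), (f p)^2
        = ∫ p in Omg a,
            ((1:ℝ)/16) * Set.indicator {q : ℝ × ℝ | (k:ℝ)/16 < q.2} (fun q => (f q)^2) p := by
      intro k _
      have e : Omg a ∩ (Set.Ioo (-1) (a+1) ×ˢ Set.Ioo ((k:ℝ)/16) 2)
          = Omg a ∩ {q : ℝ × ℝ | (k:ℝ)/16 < q.2} := by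
        rw [omg_slab_eq ha (by positivity)]
        rfl
      rw [e, ← MeasureTheory.setIntegral_indicator (hTk k), ← MeasureTheory.integral_const_mul]
    rw [Finset.sum_congr rfl hrw, ← MeasureTheory.integral_finset_sum _ (fun k _ =>
      (I5.indicator (hTk k)).const_mul _)]
    refine MeasureTheory.setIntegral_mono_on I6
      (MeasureTheory.integrable_finset_sum _ (fun k _ => (I5.indicator (hTk k)).const_mul _))
      measurableSet_omg (fun p hp => ?_)
    obtain ⟨hx0, _, hy0, hy1⟩ := hp
    have hy1' : p.2 ≤ 1 := by
      have : 0 ≤ p.1 / a := div_nonneg hx0 ha.le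
      linarith
    have hkey := sum_ind hy0 hy1'
    have hmul := mul_le_mul_of_nonneg_right hkey (sq_nonneg (f p))
    calc p.2 * (f p)^2 ≤ (∑ k ∈ Finset.range 16,
          ((1:ℝ)/16) * (if (k:ℝ)/16 < p.2 then 1 else 0)) * (f p)^2 := hmul
      _ = ∑ k ∈ Finset.range 16, ((1:ℝ)/16) *
          Set.indicator {q : ℝ × ℝ | (k:ℝ)/16 < q.2} (fun q => (f q)^2) p := by
        rw [Finset.sum_mul]
        refine Finset.sum_congr rfl (fun k _ => ?_)
        simp only [Set.indicator_apply, Set.mem_setOf_eq]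
        by_cases hk : (k:ℝ)/16 < p.2
        · rw [if_pos hk, if_pos hk]; ring
        · rw [if_neg hk, if_neg hk]; ring
  linarith [hMle, hMq, hq]

end PerJ

end XEnergy

/-- Let `(u_j)` be a sequence of `L²`-normalized Dirichlet eigenfunctions on the right
triangle `Ω` with semiclassical parameters `h_j → 0`, satisfying the Marklof–Rudnick
spatial equidistribution property: for every open axis-aligned rectangle `R`,
`∫_{Ω∩R} u_j² dV → Area(Ω∩R)/Area(Ω)`.  Then
`liminf_{j→∞} ∫_Ω |h_j ∂_x u_j|² dV ≥ 1/8`. -/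
theorem x_energy_lower_bound (a : ℝ) (ha : 0 < a)
    (u : ℕ → ℝ × ℝ → ℝ) (h : ℕ → ℝ)
    (hpos : ∀ j, 0 < h j) (hto : Tendsto h atTop (nhds 0))
    (hreg : ∀ j, ∃ U : Set (ℝ × ℝ), IsOpen U ∧ Omg a ⊆ U ∧ ContDiffOn ℝ 2 (u j) U)
    (heig : ∀ j, ∀ p ∈ Omg a,
      -(h j) ^ 2 *
        (fderiv ℝ (fun q => fderiv ℝ (u j) q (1, 0)) p (1, 0)
          + fderiv ℝ (fun q => fderiv ℝ (u j) q (0, 1)) p (0, 1))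
      = u j p)
    (hbdry : ∀ j, ∀ p ∈ frontier (Omg a), u j p = 0)
    (hnorm : ∀ j, ∫ p in Omg a, (u j p) ^ 2 = 1)
    (hequi : ∀ α β γ δ : ℝ,
      Tendsto (fun j => ∫ p in Omg a ∩ (Set.Ioo α β ×ˢ Set.Ioo γ δ), (u j p) ^ 2)
        atTop
        (nhds ((volume (Omg a ∩ (Set.Ioo α β ×ˢ Set.Ioo γ δ))).toReal
          / (volume (Omg a)).toReal))) :
    1 / 8 ≤
      liminf (fun j => ∫ p in Omg a, ((h j) * fderiv ℝ (u j) p (1, 0)) ^ 2) atTop := by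
  classical
  choose U hUopen hUsub hUc2 using hreg
  have hkey := fun j => XEnergy.per_j ha (hUopen j) (hUsub j) (hUc2 j) (hbdry j)
    (hpos j) (heig j) (hnorm j)
  set F : ℕ → ℝ := fun j => ∫ p in Omg a, ((h j) * fderiv ℝ (u j) p (1, 0)) ^ 2 with hF
  set G : ℕ → ℝ := fun j => ∑ k ∈ Finset.range 16, ((1:ℝ)/16) *
    ∫ p in Omg a ∩ (Set.Ioo (-1) (a+1) ×ˢ Set.Ioo ((k:ℝ)/16) 2), (u j p)^2 with hG
  have hGlim : Tendsto G atTop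
      (nhds (∑ k ∈ Finset.range 16, ((1:ℝ)/16) * (1 - (k:ℝ)/16)^2)) := by
    refine tendsto_finset_sum _ (fun k hk => ?_)
    have hk16 : (k:ℝ)/16 ∈ Set.Ico (0:ℝ) 1 := by
      constructor
      · positivity
      · rw [div_lt_one (by norm_num)]
        exact_mod_cast Finset.mem_range.mp hk
    have ht := hequi (-1) (a+1) ((k:ℝ)/16) 2
    rw [XEnergy.ratio_slab ha hk16] at ht
    exact ht.const_mul _
  have hLlt : (∑ k ∈ Finset.range 16, ((1:ℝ)/16) * (1 - (k:ℝ)/16)^2) < 3/8 := by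
    norm_num [Finset.sum_range_succ]
  have hev : ∀ᶠ j in atTop, 1/8 ≤ F j := by
    filter_upwards [hGlim.eventually_lt_const hLlt] with j hj
    have h2 := (hkey j).2
    have : 1/2 - G j ≤ F j := h2
    linarith
  have hbd : IsBoundedUnder (· ≤ ·) atTop F :=
    Filter.isBoundedUnder_of ⟨1, fun j => (hkey j).1⟩
  exact Filter.le_liminf_of_le hbd.isCoboundedUnder_ge hev
end
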